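/- arXiv:1209.4970 — 7 statements merged into one kernel-verified Lean document; each statement's English description precedes it below -/
import Mathlib

section
/- Let N > 1 and let Z : [0,2π] → ℝ be a twice continuously differentiable finite phase response curve satisfying Z'(θ) > −1 for all θ ∈ (0,2π), Z'(θ) < 0 for all θ ∈ (0,2π), and either Z''(θ) > 0 for all θ ∈ (0,2π) or Z''(θ) < 0 for all θ ∈ (0,2π). Then the (N−1)-dimensional firing map H is contracting with respect to the 1-norm on the cone C_N: for all x, y ∈ C_N with x ≠ y such that H(x) and H(y) are defined, ‖H(x) − H(y)‖ < ‖x − y‖. -/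
open Real Set

/-- The scalar firing map `h(θ) = 2π − θ + Z(2π − θ)`. -/
noncomputable def firingScalar (Z : ℝ → ℝ) (θ : ℝ) : ℝ :=
  2 * π - θ + Z (2 * π - θ)

/-- The `(N−1)`-dimensional firing map
`H(θ₁,…,θ_{N−1}) = (h(θ_{N−1}), h(θ_{N−1}−θ₁), …, h(θ_{N−1}−θ_{N−2}))`
(here `m = N − 1` and indices are zero-based). -/
noncomputable def firingMap (Z : ℝ → ℝ) {m : ℕ} (x : Fin m → ℝ) : Fin m → ℝ :=
  fun i =>
    firingScalar Z
      (x ⟨m - 1, Nat.sub_lt i.pos Nat.one_pos⟩ -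
        if h : (i : ℕ) = 0 then 0
        else x ⟨(i : ℕ) - 1, Nat.lt_of_le_of_lt (Nat.sub_le _ _) i.isLt⟩)

/-- The open cone `C_N = {θ ∈ ℝ^{N−1} : 0 < θ₁ < θ₂ < ⋯ < θ_{N−1} < 2π}`. -/
def firingCone {m : ℕ} : Set (Fin m → ℝ) :=
  {x | (∀ i, 0 < x i) ∧ StrictMono x ∧ ∀ i, x i < 2 * π}

/-- The 1-norm `‖θ‖ = |θ₁| + Σ_{k=1}^{N−2} |θ_k − θ_{k+1}| + |θ_{N−1}|`. -/
noncomputable def norm1 {m : ℕ} (x : Fin m → ℝ) : ℝ :=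
  (if h : 0 < m then
      |x ⟨0, h⟩| + |x ⟨m - 1, Nat.sub_lt h Nat.one_pos⟩|
    else 0) +
  ∑ k : Fin (m - 1),
    |x ⟨(k : ℕ), Nat.lt_of_lt_of_le k.isLt (Nat.sub_le m 1)⟩ -
      x ⟨(k : ℕ) + 1, Nat.add_lt_of_lt_sub k.isLt⟩|

/-!
With `F u = u + Z u`, the components of `H x` are the values of `F` at the phases
`P_k = 2π - θ_{N-1} + θ_{k-1}` reached when oscillator `N-1` fires, and both 1-norms are total
variations of the sequences `F ∘ P - F ∘ Q` and `P - Q` along the increasing chains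
`0 = P_0 ≤ ⋯ ≤ P_N = 2π` (the 1-norm is the variation of `(0, θ₁, …, θ_{N-1})` around the circle,
which does not see rotations). On the finite grid of all values of `P` and `Q`, the chord slopes of
`F` lie in `[0, 1)` by the mean value theorem and are monotone because `Z''` has a sign. When they
decrease, `F` agrees on the grid with `c + α t + ∑ β_j min t c_j`, where `α, β_j ≥ 0` and
`α + ∑ β_j` is the first slope, and truncating two increasing sequences with a common endpoint at
a level `c` does not increase the variation of their difference: `min P c - min Q c` is
`P - Q` clamped into a shrinking band. The increasing case follows by the reflection `t ↦ -t`.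
-/

noncomputable def totalVariation (n : ℕ) (u : ℕ → ℝ) : ℝ :=
  ∑ k ∈ Finset.range n, |u (k + 1) - u k|

lemma totalVariation_congr {n : ℕ} {u v : ℕ → ℝ} (h : ∀ k ≤ n, u k = v k) :
    totalVariation n u = totalVariation n v :=
  Finset.sum_congr rfl fun k hk => by
    rw [Finset.mem_range] at hk
    rw [h k hk.le, h (k + 1) hk]

lemma totalVariation_sum_mul_le {ι : Type*} (s : Finset ι) (n : ℕ) (c : ι → ℝ)
    (hc : ∀ j ∈ s, 0 ≤ c j) (v : ι → ℕ → ℝ) :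
    totalVariation n (fun k => ∑ j ∈ s, c j * v j k) ≤ ∑ j ∈ s, c j * totalVariation n (v j) := by
  simp only [totalVariation, Finset.mul_sum]
  rw [Finset.sum_comm]
  refine Finset.sum_le_sum fun k _ => ?_
  rw [← Finset.sum_sub_distrib]
  refine (Finset.abs_sum_le_sum_abs _ _).trans_eq (Finset.sum_congr rfl fun j hj => ?_)
  rw [← mul_sub, abs_mul, abs_of_nonneg (hc j hj)]

lemma totalVariation_neg_rev (n : ℕ) (u v : ℕ → ℝ) :
    totalVariation n (fun k => -u (n - k) - -v (n - k)) =
      totalVariation n (fun k => u k - v k) := by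
  unfold totalVariation
  rw [← Finset.sum_range_reflect]
  refine Finset.sum_congr rfl fun k hk => ?_
  rw [Finset.mem_range] at hk
  dsimp only
  rw [show n - (n - 1 - k + 1) = k by omega, show n - (n - 1 - k) = k + 1 by omega]
  congr 1
  ring

lemma abs_sub_eq_abs_sub_clamp_add {lo hi q : ℝ} (hq : q ∈ Icc lo hi) (x : ℝ) :
    |x - q| = |x - max lo (min hi x)| + |max lo (min hi x) - q| := by
  obtain ⟨hlo, hhi⟩ := hq
  rcases le_total x lo with h | h
  · rw [min_eq_right (h.trans (hlo.trans hhi)), max_eq_left h, abs_of_nonpos (by linarith),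
      abs_of_nonpos (by linarith), abs_of_nonpos (by linarith)]
    ring
  · rcases le_total x hi with h' | h'
    · rw [min_eq_right h', max_eq_right h, sub_self, abs_zero, zero_add]
    · rw [min_eq_left h', max_eq_right (hlo.trans hhi), abs_of_nonneg (by linarith),
        abs_of_nonneg (by linarith), abs_of_nonneg (by linarith)]
      ring

theorem totalVariation_clamp_le {n : ℕ} {lo hi δ : ℕ → ℝ}
    (hlo : ∀ k < n, lo k ≤ lo (k + 1)) (hhi : ∀ k < n, hi (k + 1) ≤ hi k)
    (hband : ∀ k ≤ n, lo k ≤ hi k) (hδ : δ n ∈ Icc (lo n) (hi n)) :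
    totalVariation n (fun k => max (lo k) (min (hi k) (δ k))) ≤ totalVariation n δ := by
  set ψ := fun k => max (lo k) (min (hi k) (δ k))
  -- the distance `e k` from `δ k` to the `k`-th band is a potential that pays for the steps of `ψ`
  set e := fun k => |δ k - ψ k|
  have step : ∀ k < n, |ψ (k + 1) - ψ k| + e k ≤ |δ (k + 1) - δ k| + e (k + 1) := by
    intro k hk
    have hmem : ψ (k + 1) ∈ Icc (lo k) (hi k) :=
      ⟨(hlo k hk).trans (le_max_left _ _),
        (max_le (hband _ hk) (min_le_left _ _)).trans (hhi k hk)⟩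
    have h₁ : |δ k - ψ (k + 1)| = e k + |ψ (k + 1) - ψ k| := by
      rw [abs_sub_eq_abs_sub_clamp_add hmem, abs_sub_comm (ψ (k + 1))]
    have h₂ : |δ k - ψ (k + 1)| ≤ |δ (k + 1) - δ k| + e (k + 1) := by
      rw [abs_sub_comm (δ (k + 1))]
      exact abs_sub_le _ _ _
    linarith
  have hen : e n = 0 := by
    simp [e, ψ, min_eq_right hδ.2, max_eq_right hδ.1]
  have hsum := Finset.sum_le_sum fun k hk => step k (Finset.mem_range.1 hk)
  rw [Finset.sum_add_distrib, Finset.sum_add_distrib] at hsum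
  have htel := Finset.sum_range_sub e n
  rw [Finset.sum_sub_distrib, hen] at htel
  have : 0 ≤ e 0 := abs_nonneg _
  unfold totalVariation
  linarith

lemma min_sub_min_eq_clamp (p q c : ℝ) :
    min p c - min q c = max (min (p - c) 0) (min (max (c - q) 0) (p - q)) := by
  simp only [min_def, max_def]
  split_ifs <;> linarith

theorem totalVariation_min_sub_min_le {n : ℕ} {P Q : ℕ → ℝ} (hP : ∀ k < n, P k ≤ P (k + 1))
    (hQ : ∀ k < n, Q k ≤ Q (k + 1)) (hPQ : P n = Q n) (c : ℝ) :
    totalVariation n (fun k => min (P k) c - min (Q k) c) ≤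
      totalVariation n (fun k => P k - Q k) := by
  simp_rw [min_sub_min_eq_clamp]
  refine totalVariation_clamp_le (δ := fun k => P k - Q k)
    (fun k hk => ?_) (fun k hk => ?_) (fun k _ => ?_) ?_
  · exact min_le_min_right _ (by linarith [hP k hk])
  · exact max_le_max_right _ (by linarith [hQ k hk])
  · exact (min_le_right _ _).trans (le_max_right _ _)
  · simp [hPQ]

lemma sum_range_mul_sub_eq (ρ m : ℕ → ℝ) (M : ℕ) :
    ∑ j ∈ Finset.range M, ρ j * (m (j + 1) - m j) =
      ∑ j ∈ Finset.range M, (ρ j - ρ (j + 1)) * (m (j + 1) - m 0) + ρ M * (m M - m 0) := by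
  induction M with
  | zero => simp
  | succ M ih => rw [Finset.sum_range_succ, Finset.sum_range_succ, ih]; ring

section Grid

variable {F : ℝ → ℝ} {X : ℕ → ℝ}

lemma slope_mul_min_sub_min (hX : Monotone X) (i j : ℕ) :
    slope F (X j) (X (j + 1)) * (min (X i) (X (j + 1)) - min (X i) (X j)) =
      F (min (X i) (X (j + 1))) - F (min (X i) (X j)) := by
  rcases le_or_gt i j with h | h
  · rw [min_eq_left (hX h), min_eq_left (hX (h.trans j.le_succ)), sub_self, sub_self, mul_zero]
  · rw [min_eq_right (hX h.le), min_eq_right (hX h), mul_comm]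
    exact sub_smul_slope F _ _

/-- Summation by parts; the grid is constant after `M`, so the last slope is `slope F x x = 0`. -/
lemma sub_eq_sum_slope_sub_mul_min (hX : Monotone X) {M i : ℕ} (hXM : X (M + 1) = X M)
    (hi : i ≤ M) :
    F (X i) - F (X 0) = ∑ j ∈ Finset.range M,
      (slope F (X j) (X (j + 1)) - slope F (X (j + 1)) (X (j + 2))) *
        (min (X i) (X (j + 1)) - X 0) := by
  have htel := Finset.sum_range_sub (fun j => F (min (X i) (X j))) M
  simp only [← slope_mul_min_sub_min hX, min_eq_left (hX hi), min_eq_right (hX i.zero_le)] at htel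
  rw [← htel, sum_range_mul_sub_eq _ (fun j => min (X i) (X j)), hXM, slope_same, zero_mul,
    add_zero, min_eq_right (hX i.zero_le)]

theorem totalVariation_comp_sub_comp_le_of_grid {n M : ℕ} {P Q : ℕ → ℝ} (hX : Monotone X)
    (hXM : X (M + 1) = X M)
    (hslope : ∀ j < M, slope F (X (j + 1)) (X (j + 2)) ≤ slope F (X j) (X (j + 1)))
    (hP : ∀ k < n, P k ≤ P (k + 1)) (hQ : ∀ k < n, Q k ≤ Q (k + 1)) (hPQ : P n = Q n)
    (hPX : ∀ k ≤ n, ∃ i ≤ M, X i = P k) (hQX : ∀ k ≤ n, ∃ i ≤ M, X i = Q k) :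
    totalVariation n (fun k => F (P k) - F (Q k)) ≤
      slope F (X 0) (X 1) * totalVariation n (fun k => P k - Q k) := by
  set ρ := fun j => slope F (X j) (X (j + 1))
  have hrep : ∀ k ≤ n, F (P k) - F (Q k) = ∑ j ∈ Finset.range M,
      (ρ j - ρ (j + 1)) * (min (P k) (X (j + 1)) - min (Q k) (X (j + 1))) := by
    intro k hk
    obtain ⟨i, hi, hPi⟩ := hPX k hk
    obtain ⟨i', hi', hQi⟩ := hQX k hk
    rw [← hPi, ← hQi, ← sub_sub_sub_cancel_right _ _ (F (X 0)),
      sub_eq_sum_slope_sub_mul_min hX hXM hi, sub_eq_sum_slope_sub_mul_min hX hXM hi',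
      ← Finset.sum_sub_distrib]
    exact Finset.sum_congr rfl fun j _ => by ring
  have hρM : ρ M = 0 := by simp only [ρ, hXM, slope_same]
  calc totalVariation n (fun k => F (P k) - F (Q k))
      = totalVariation n (fun k => ∑ j ∈ Finset.range M,
          (ρ j - ρ (j + 1)) * (min (P k) (X (j + 1)) - min (Q k) (X (j + 1)))) :=
        totalVariation_congr hrep
    _ ≤ ∑ j ∈ Finset.range M, (ρ j - ρ (j + 1)) *
          totalVariation n (fun k => min (P k) (X (j + 1)) - min (Q k) (X (j + 1))) :=
        totalVariation_sum_mul_le _ _ _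
          (fun j hj => sub_nonneg.2 (hslope j (Finset.mem_range.1 hj))) _
    _ ≤ ∑ j ∈ Finset.range M, (ρ j - ρ (j + 1)) * totalVariation n (fun k => P k - Q k) :=
        Finset.sum_le_sum fun j hj => mul_le_mul_of_nonneg_left
          (totalVariation_min_sub_min_le hP hQ hPQ _)
          (sub_nonneg.2 (hslope j (Finset.mem_range.1 hj)))
    _ = ρ 0 * totalVariation n (fun k => P k - Q k) := by
        rw [← Finset.sum_mul, Finset.sum_range_sub', hρM, sub_zero]

end Grid

lemma Finset.exists_monotone_enum {α : Type*} [LinearOrder α] (S : Finset α) (hS : S.Nonempty) :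
    ∃ (M : ℕ) (X : ℕ → α), Monotone X ∧ X (M + 1) = X M ∧ (∀ j < M, X j < X (j + 1)) ∧
      (∀ j, X j ∈ S) ∧ ∀ t ∈ S, ∃ i ≤ M, X i = t := by
  have hcard : S.card = S.card - 1 + 1 := (Nat.succ_pred_eq_of_pos hS.card_pos).symm
  set M := S.card - 1
  set e := S.orderEmbOfFin hcard
  refine ⟨M, fun j => e (Fin.clamp j M), e.monotone.comp Fin.clamp_monotone, ?_, fun j hj => ?_,
    fun j => S.orderEmbOfFin_mem hcard _, fun t ht => ?_⟩
  · simp only [Fin.clamp_eq_last _ _ M.le_succ, Fin.clamp_eq_last _ _ le_rfl]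
  · exact e.strictMono (by simp [Fin.lt_def]; omega)
  · obtain ⟨i, rfl⟩ : t ∈ Set.range e := by rw [Finset.range_orderEmbOfFin]; exact ht
    refine ⟨i, i.is_le, ?_⟩
    dsimp only
    congr
    ext
    simpa using i.is_le

section MeanValue

variable {F w : ℝ → ℝ} {a b : ℝ}

lemma exists_mem_Ioo_slope_eq (hF : ContinuousOn F (Icc a b))
    (hFw : ∀ t ∈ Ioo a b, HasDerivAt F (w t) t) {x y : ℝ} (hax : a ≤ x) (hxy : x < y)
    (hyb : y ≤ b) : ∃ ξ ∈ Ioo x y, slope F x y = w ξ := by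
  obtain ⟨ξ, hξ, h⟩ := exists_hasDerivAt_eq_slope F w hxy (hF.mono (Icc_subset_Icc hax hyb))
    fun t ht => hFw t ⟨hax.trans_lt ht.1, ht.2.trans_le hyb⟩
  exact ⟨ξ, hξ, by rw [slope_def_field, h]⟩

theorem totalVariation_comp_sub_comp_lt_of_antitoneOn (hF : ContinuousOn F (Icc a b))
    (hFw : ∀ t ∈ Ioo a b, HasDerivAt F (w t) t) (hw0 : ∀ t ∈ Ioo a b, 0 ≤ w t)
    (hw1 : ∀ t ∈ Ioo a b, w t < 1) (hw : AntitoneOn w (Ioo a b)) {n : ℕ} {P Q : ℕ → ℝ}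
    (hP : ∀ k < n, P k ≤ P (k + 1)) (hQ : ∀ k < n, Q k ≤ Q (k + 1))
    (hPab : ∀ k ≤ n, P k ∈ Icc a b) (hQab : ∀ k ≤ n, Q k ∈ Icc a b) (hPQ : P n = Q n)
    (hpos : 0 < totalVariation n (fun k => P k - Q k)) :
    totalVariation n (fun k => F (P k) - F (Q k)) < totalVariation n (fun k => P k - Q k) := by
  classical
  set S := (Finset.range (n + 1)).image P ∪ (Finset.range (n + 1)).image Q
  have hPS : ∀ k ≤ n, P k ∈ S := fun k hk =>
    Finset.mem_union_left _ (Finset.mem_image_of_mem P (Finset.mem_range_succ_iff.2 hk))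
  have hQS : ∀ k ≤ n, Q k ∈ S := fun k hk =>
    Finset.mem_union_right _ (Finset.mem_image_of_mem Q (Finset.mem_range_succ_iff.2 hk))
  obtain ⟨M, X, hX, hXM, hXlt, hXS, hSX⟩ := S.exists_monotone_enum ⟨P 0, hPS 0 n.zero_le⟩
  have hSab : ∀ t ∈ S, t ∈ Icc a b := by
    simp only [S, Finset.forall_mem_union, Finset.forall_mem_image, Finset.mem_range_succ_iff]
    exact ⟨hPab, hQab⟩
  have hXab (j : ℕ) : X j ∈ Icc a b := hSab _ (hXS j)
  have hmvt : ∀ j < M, ∃ ξ ∈ Ioo (X j) (X (j + 1)), ξ ∈ Ioo a b ∧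
      slope F (X j) (X (j + 1)) = w ξ := fun j hj => by
    obtain ⟨ξ, hξ, h⟩ := exists_mem_Ioo_slope_eq hF hFw (hXab j).1 (hXlt j hj) (hXab (j + 1)).2
    exact ⟨ξ, hξ, ⟨(hXab j).1.trans_lt hξ.1, hξ.2.trans_le (hXab (j + 1)).2⟩, h⟩
  have hslope : ∀ j < M, slope F (X (j + 1)) (X (j + 2)) ≤ slope F (X j) (X (j + 1)) := by
    intro j hj
    obtain ⟨ξ, hξ, hξab, hρ⟩ := hmvt j hj
    rw [hρ]
    rcases lt_or_eq_of_le (Nat.succ_le_of_lt hj) with hj' | rfl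
    · obtain ⟨ξ', hξ', hξ'ab, hρ'⟩ := hmvt (j + 1) hj'
      exact hρ' ▸ hw hξab hξ'ab (hξ.2.trans hξ'.1).le
    · rw [hXM, slope_same]
      exact hw0 ξ hξab
  have hρ0 : slope F (X 0) (X 1) < 1 := by
    rcases Nat.eq_zero_or_pos M with rfl | hM
    · rw [hXM, slope_same]
      exact one_pos
    · obtain ⟨ξ, -, hξab, hρ⟩ := hmvt 0 hM
      exact hρ ▸ hw1 ξ hξab
  calc totalVariation n (fun k => F (P k) - F (Q k))
      ≤ slope F (X 0) (X 1) * totalVariation n (fun k => P k - Q k) :=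
        totalVariation_comp_sub_comp_le_of_grid hX hXM hslope hP hQ hPQ
          (fun k hk => hSX _ (hPS k hk)) (fun k hk => hSX _ (hQS k hk))
    _ < totalVariation n (fun k => P k - Q k) := mul_lt_of_lt_one_left hpos hρ0

theorem totalVariation_comp_sub_comp_lt (hF : ContinuousOn F (Icc a b))
    (hFw : ∀ t ∈ Ioo a b, HasDerivAt F (w t) t) (hw0 : ∀ t ∈ Ioo a b, 0 ≤ w t)
    (hw1 : ∀ t ∈ Ioo a b, w t < 1) (hw : MonotoneOn w (Ioo a b) ∨ AntitoneOn w (Ioo a b))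
    {n : ℕ} {P Q : ℕ → ℝ} (hP : ∀ k < n, P k ≤ P (k + 1)) (hQ : ∀ k < n, Q k ≤ Q (k + 1))
    (hPab : ∀ k ≤ n, P k ∈ Icc a b) (hQab : ∀ k ≤ n, Q k ∈ Icc a b) (hPQ₀ : P 0 = Q 0)
    (hPQ : P n = Q n) (hpos : 0 < totalVariation n (fun k => P k - Q k)) :
    totalVariation n (fun k => F (P k) - F (Q k)) < totalVariation n (fun k => P k - Q k) := by
  rcases hw.symm with hw | hw
  · exact totalVariation_comp_sub_comp_lt_of_antitoneOn hF hFw hw0 hw1 hw hP hQ hPab hQab hPQ hpos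
  -- reflect `t ↦ -t`, `k ↦ n - k`: this turns the monotone case into the antitone one
  have hneg : ∀ t ∈ Ioo (-b) (-a), -t ∈ Ioo a b := fun t ht =>
    ⟨by linarith [ht.2], by linarith [ht.1]⟩
  have hrev : ∀ {R : ℕ → ℝ}, (∀ k < n, R k ≤ R (k + 1)) →
      ∀ k < n, -R (n - k) ≤ -R (n - (k + 1)) := fun hR k hk => by
    have := hR (n - (k + 1)) (by omega)
    rw [show n - (k + 1) + 1 = n - k by omega] at this
    linarith
  have hmem : ∀ {R : ℕ → ℝ}, (∀ k ≤ n, R k ∈ Icc a b) →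
      ∀ k ≤ n, -R (n - k) ∈ Icc (-b) (-a) := fun hR k _ => by
    obtain ⟨h1, h2⟩ := hR (n - k) (Nat.sub_le _ _)
    exact ⟨by linarith, by linarith⟩
  have key := totalVariation_comp_sub_comp_lt_of_antitoneOn (F := fun t => -F (-t))
    (w := fun t => w (-t)) (a := -b) (b := -a)
    (hF.neg.comp continuousOn_neg fun t ht => ⟨by linarith [ht.2], by linarith [ht.1]⟩)
    (fun t ht => ((hFw (-t) (hneg t ht)).comp t (hasDerivAt_neg t)).neg.congr_deriv (by ring))
    (fun t ht => hw0 _ (hneg t ht)) (fun t ht => hw1 _ (hneg t ht))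
    (fun s hs t ht hst => hw (hneg t ht) (hneg s hs) (neg_le_neg hst))
    (hrev hP) (hrev hQ) (hmem hPab) (hmem hQab) (by simp [hPQ₀])
    (by rwa [totalVariation_neg_rev])
  simp only [neg_neg] at key
  rwa [totalVariation_neg_rev n P Q,
    totalVariation_neg_rev n (fun k => F (P k)) (fun k => F (Q k))] at key

end MeanValue

section Cyclic
variable {m : ℕ}

noncomputable def cyclicVariation (f : Fin (m + 1) → ℝ) : ℝ := ∑ i, |f (i + 1) - f i|

lemma cyclicVariation_comp_add_right (f : Fin (m + 1) → ℝ) (r : Fin (m + 1)) :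
    cyclicVariation (fun i => f (i + r)) = cyclicVariation f := by
  unfold cyclicVariation
  simp only [add_right_comm _ (1 : Fin (m + 1))]
  exact Equiv.sum_comp (Equiv.addRight r) (fun j => |f (j + 1) - f j|)

lemma cyclicVariation_sub_const (f : Fin (m + 1) → ℝ) (c : ℝ) :
    cyclicVariation (fun i => f i - c) = cyclicVariation f := by
  simp only [cyclicVariation, sub_sub_sub_cancel_right]

lemma totalVariation_eq_cyclicVariation {u : ℕ → ℝ} (hu : u (m + 1) = u 0) :
    totalVariation (m + 1) u = cyclicVariation (fun i : Fin (m + 1) => u i) := by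
  rw [totalVariation, cyclicVariation, Fin.sum_univ_castSucc, Finset.sum_range_succ,
    ← Fin.sum_univ_eq_sum_range (fun k => |u (k + 1) - u k|)]
  simp [Fin.coeSucc_eq_succ, hu]

def phases (x : Fin m → ℝ) : Fin (m + 1) → ℝ := Fin.cons 0 x

lemma norm1_eq_cyclicVariation (v : Fin m → ℝ) : norm1 v = cyclicVariation (phases v) := by
  rcases m with _ | m
  · simp [norm1, cyclicVariation]
  · unfold norm1 cyclicVariation
    rw [Fin.sum_univ_succ, Fin.sum_univ_castSucc, dif_pos m.succ_pos]
    have hsucc (i : Fin m) : i.castSucc.succ + 1 = i.succ.succ := by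
      rw [Fin.succ_castSucc, Fin.coeSucc_eq_succ]
    rw [zero_add, show (Fin.last m).succ + 1 = 0 by simp]
    simp only [phases, hsucc, Fin.cons_succ, Fin.cons_one,
      Fin.cons_zero, sub_zero, zero_sub, abs_neg]
    rw [add_comm (∑ x : Fin m, _), ← add_assoc]
    congr 1
    exact Finset.sum_congr rfl fun k _ => abs_sub_comm _ _

lemma norm1_pos {v : Fin m → ℝ} (hv : v ≠ 0) : 0 < norm1 v := by
  rw [norm1_eq_cyclicVariation]
  refine (Finset.sum_nonneg fun i _ => abs_nonneg _).lt_of_ne fun h => hv ?_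
  have hstep (i : Fin (m + 1)) : phases v (i + 1) = phases v i :=
    sub_eq_zero.1 <| abs_eq_zero.1 <|
      (Finset.sum_eq_zero_iff_of_nonneg fun _ _ => abs_nonneg _).1 h.symm i (Finset.mem_univ _)
  have hzero : ∀ i : Fin (m + 1), phases v i = 0 :=
    Fin.induction rfl fun i hi => by rw [← Fin.coeSucc_eq_succ, hstep, hi]
  funext i
  simpa [phases] using hzero i.succ

end Cyclic

section Firing

variable {m : ℕ}

lemma phases_sub (x y : Fin m → ℝ) : phases (x - y) = phases x - phases y := by
  funext i
  cases i using Fin.cases <;> simp [phases]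

lemma firingMap_apply (Z : ℝ → ℝ) (x : Fin m → ℝ) (i : Fin m) :
    firingMap Z x i = firingScalar Z (phases x (Fin.last m) - phases x i.castSucc) := by
  obtain ⟨m, rfl⟩ : ∃ k, m = k + 1 := ⟨m - 1, by have := i.pos; omega⟩
  rw [firingMap, ← Fin.succ_last]
  congr 2
  cases i using Fin.cases with
  | zero => simp [phases]
  | succ j => simp [phases]; rfl

/-- `P_0 = 0` and `P_{j+1} = 2π - θ_{N-1} + θ_j` for `j < N` (with `θ₀ = 0`, constant afterwards):
the phases of the oscillators at the moment oscillator `N-1` reaches `2π` and fires. -/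
noncomputable def advancedPhases (x : Fin m → ℝ) (k : ℕ) : ℝ :=
  if k = 0 then 0 else 2 * π - phases x (Fin.last m) + phases x (Fin.clamp (k - 1) m)

lemma advancedPhases_zero (x : Fin m → ℝ) : advancedPhases x 0 = 0 := if_pos rfl

lemma advancedPhases_add_one (x : Fin m → ℝ) (k : ℕ) :
    advancedPhases x (k + 1) = 2 * π - phases x (Fin.last m) + phases x (Fin.clamp k m) :=
  if_neg k.succ_ne_zero

lemma advancedPhases_succ (x : Fin m → ℝ) (i : Fin (m + 1)) :
    advancedPhases x (i + 1) = 2 * π - phases x (Fin.last m) + phases x i := by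
  rw [advancedPhases_add_one]
  congr
  ext
  simpa using i.is_le

lemma advancedPhases_last (x : Fin m → ℝ) : advancedPhases x (m + 1) = 2 * π := by
  simpa using advancedPhases_succ x (Fin.last m)

lemma monotone_phases {x : Fin m → ℝ} (hx : x ∈ firingCone) : Monotone (phases x) :=
  (Fin.strictMono_cons.2 ⟨hx.1, hx.2.1⟩).monotone

lemma phases_mem_Icc {x : Fin m → ℝ} (hx : x ∈ firingCone) (i : Fin (m + 1)) :
    phases x i ∈ Icc 0 (2 * π) := by
  cases i using Fin.cases
  · simp [phases, pi_pos.le]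
  · simpa [phases] using ⟨(hx.1 _).le, (hx.2.2 _).le⟩

lemma advancedPhases_mem_Icc {x : Fin m → ℝ} (hx : x ∈ firingCone) (k : ℕ) :
    advancedPhases x k ∈ Icc 0 (2 * π) := by
  rcases k with _ | k
  · simp [advancedPhases_zero, pi_pos.le]
  · have := monotone_phases hx (Fin.le_last (Fin.clamp k m))
    obtain ⟨h₁, -⟩ := phases_mem_Icc hx (Fin.clamp k m)
    obtain ⟨-, h₂⟩ := phases_mem_Icc hx (Fin.last m)
    rw [advancedPhases_add_one]
    constructor <;> linarith

lemma monotone_advancedPhases {x : Fin m → ℝ} (hx : x ∈ firingCone) :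
    Monotone (advancedPhases x) := by
  refine monotone_nat_of_le_succ fun k => ?_
  rcases k with _ | k
  · simpa [advancedPhases_zero] using (advancedPhases_mem_Icc hx 1).1
  · rw [advancedPhases_add_one, advancedPhases_add_one]
    have := monotone_phases hx (Fin.clamp_monotone k.le_succ)
    linarith

lemma norm1_sub_eq_totalVariation (x y : Fin m → ℝ) :
    norm1 (x - y) =
      totalVariation (m + 1) (fun k => advancedPhases x k - advancedPhases y k) := by
  rw [totalVariation_eq_cyclicVariation (by simp [advancedPhases_last, advancedPhases_zero]),
    ← cyclicVariation_comp_add_right _ 1, norm1_eq_cyclicVariation,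
    ← cyclicVariation_sub_const (phases (x - y)) (phases (x - y) (Fin.last m))]
  congr 1
  funext i
  cases i using Fin.lastCases with
  | last => simp [advancedPhases_zero]
  | cast j =>
    have hx := advancedPhases_succ x j.castSucc
    have hy := advancedPhases_succ y j.castSucc
    rw [Fin.val_castSucc] at hx hy
    rw [Fin.coeSucc_eq_succ, Fin.val_succ, hx, hy, phases_sub]
    simp only [Pi.sub_apply]
    ring

lemma norm1_firingMap_sub_eq_totalVariation (Z : ℝ → ℝ) (x y : Fin m → ℝ) :
    norm1 (firingMap Z x - firingMap Z y) = totalVariation (m + 1)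
      (fun k => advancedPhases x k + Z (advancedPhases x k) -
        (advancedPhases y k + Z (advancedPhases y k))) := by
  rw [totalVariation_eq_cyclicVariation (by simp [advancedPhases_last, advancedPhases_zero]),
    norm1_eq_cyclicVariation]
  congr 1
  funext i
  cases i using Fin.cases with
  | zero => simp [advancedPhases_zero, phases]
  | succ j =>
    have hx := advancedPhases_succ x j.castSucc
    have hy := advancedPhases_succ y j.castSucc
    rw [Fin.val_castSucc] at hx hy
    rw [Fin.val_succ, hx, hy, phases, Fin.cons_succ, Pi.sub_apply, firingMap_apply,
      firingMap_apply, firingScalar, firingScalar]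
    ring_nf

end Firing

lemma ContDiffOn.monotoneOn_deriv_or_antitoneOn_deriv {Z : ℝ → ℝ} {a b : ℝ}
    (hZ : ContDiffOn ℝ 2 Z (Icc a b))
    (hZ'' : (∀ θ ∈ Ioo a b, 0 < deriv (deriv Z) θ) ∨ (∀ θ ∈ Ioo a b, deriv (deriv Z) θ < 0)) :
    MonotoneOn (deriv Z) (Ioo a b) ∨ AntitoneOn (deriv Z) (Ioo a b) := by
  have hcont : ContinuousOn (deriv Z) (Ioo a b) :=
    (hZ.mono Ioo_subset_Icc_self).continuousOn_deriv_of_isOpen isOpen_Ioo (by norm_num)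
  refine hZ''.imp (fun h => ?_) (fun h => ?_)
  · exact (strictMonoOn_of_deriv_pos (convex_Ioo a b) hcont (by simpa using h)).monotoneOn
  · exact (strictAntiOn_of_deriv_neg (convex_Ioo a b) hcont (by simpa using h)).antitoneOn

theorem firing_map_contracting_general
    (N : ℕ) (Z : ℝ → ℝ)
    (hZC2 : ContDiffOn ℝ 2 Z (Icc 0 (2 * π)))
    (hZord : ∀ θ ∈ Ioo (0 : ℝ) (2 * π), -1 < deriv Z θ)
    (hZmono : ∀ θ ∈ Ioo (0 : ℝ) (2 * π), deriv Z θ < 0)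
    (hZconv : (∀ θ ∈ Ioo (0 : ℝ) (2 * π), 0 < deriv (deriv Z) θ) ∨
              (∀ θ ∈ Ioo (0 : ℝ) (2 * π), deriv (deriv Z) θ < 0))
    (x y : Fin (N - 1) → ℝ)
    (hx : x ∈ firingCone) (hy : y ∈ firingCone) (hxy : x ≠ y) :
    norm1 (firingMap Z x - firingMap Z y) < norm1 (x - y) := by
  have hderiv (t : ℝ) (ht : t ∈ Ioo 0 (2 * π)) :
      HasDerivAt (fun u => u + Z u) (1 + deriv Z t) t :=
    (hasDerivAt_id t).add ((hZC2.differentiableOn (by norm_num) t (Ioo_subset_Icc_self ht)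
      ).differentiableAt (Icc_mem_nhds ht.1 ht.2)).hasDerivAt
  have hmono : MonotoneOn (fun t => 1 + deriv Z t) (Ioo 0 (2 * π)) ∨
      AntitoneOn (fun t => 1 + deriv Z t) (Ioo 0 (2 * π)) :=
    (hZC2.monotoneOn_deriv_or_antitoneOn_deriv hZconv).imp
    (fun h _ ha _ hb hab => add_le_add_right (h ha hb hab) 1)
    (fun h _ ha _ hb hab => add_le_add_right (h ha hb hab) 1)
  rw [norm1_firingMap_sub_eq_totalVariation, norm1_sub_eq_totalVariation]
  refine totalVariation_comp_sub_comp_lt (P := advancedPhases x) (Q := advancedPhases y)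
    (continuousOn_id.add hZC2.continuousOn) hderiv
    (fun t ht => by linarith [hZord t ht]) (fun t ht => by linarith [hZmono t ht]) hmono
    (fun k _ => monotone_advancedPhases hx k.le_succ)
    (fun k _ => monotone_advancedPhases hy k.le_succ)
    (fun k _ => advancedPhases_mem_Icc hx k) (fun k _ => advancedPhases_mem_Icc hy k)
    (by simp [advancedPhases_zero]) (by simp [advancedPhases_last]) ?_
  rw [← norm1_sub_eq_totalVariation]
  exact norm1_pos (sub_ne_zero.2 hxy)

/-- Theorem (firing map contraction for monotone decreasing PRC):
if the finite PRC `Z` is C², order-preserving (`Z' > −1`), monotone decreasing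
(`Z' < 0`) and of constant convexity on `(0,2π)`, then the `(N−1)`-dimensional
firing map is contracting on the cone with respect to the 1-norm. -/
theorem firing_map_contracting
    (N : ℕ) (hN : 1 < N) (Z : ℝ → ℝ)
    (hZC2 : ContDiffOn ℝ 2 Z (Icc 0 (2 * π)))
    (hZord : ∀ θ ∈ Ioo (0 : ℝ) (2 * π), -1 < deriv Z θ)
    (hZmono : ∀ θ ∈ Ioo (0 : ℝ) (2 * π), deriv Z θ < 0)
    (hZconv : (∀ θ ∈ Ioo (0 : ℝ) (2 * π), 0 < deriv (deriv Z) θ) ∨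
              (∀ θ ∈ Ioo (0 : ℝ) (2 * π), deriv (deriv Z) θ < 0))
    (x y : Fin (N - 1) → ℝ)
    (hx : x ∈ firingCone) (hy : y ∈ firingCone) (hxy : x ≠ y)
    (hHx : firingMap Z x ∈ firingCone) (hHy : firingMap Z y ∈ firingCone) :
    norm1 (firingMap Z x - firingMap Z y) < norm1 (x - y) :=
  firing_map_contracting_general N Z hZC2 hZord hZmono hZconv x y hx hy hxy
end

section
/- Let N > 1 and let Z : [0,2π] → ℝ be a twice continuously differentiable finite phase response curve satisfying Z'(θ) > −1 for all θ ∈ (0,2π), Z'(θ) > 0 for all θ ∈ (0,2π), and either Z''(θ) > 0 for all θ ∈ (0,2π) or Z''(θ) < 0 for all θ ∈ (0,2π). Then the (N−1)-dimensional firing map H is expanding with respect to the 1-norm on the cone C_N: for all x, y ∈ C_N with x ≠ y such that H(x) and H(y) are defined, ‖H(x) − H(y)‖ > ‖x − y‖. -/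
/-!
Put `θ₀ = 0` and let `u₀ = 0`, `u_k = 2π − θ_{N−1} + θ_{k−1}` for `1 ≤ k ≤ N`: an increasing
sequence in `[0, 2π]` ending at `u_N = 2π`, with `H(θ)_k = f(u_k)` for `f = id + Z`. Both 1-norms
are total variations of sequences vanishing at both ends: `‖θ − θ'‖ = TV(u − u')` (the difference
sequence of `u − u'` is a cyclic rotation of that of `(0, θ − θ', 0)`) and
`‖H θ − H θ'‖ = TV(f ∘ u − f ∘ u')`.

Write `p = u − u'` and `g = Z ∘ u − Z ∘ u'`, so `g` has the sign of `p`. For convex increasing `Z`,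
a longer interval further to the right has a larger `Z`-increment; hence whenever `|p|` grows along
a step, `|g|` grows with it, and this yields `|Δ(p + g)| ≥ |Δp| + |g_k| − |g_{k+1}|` at every step.
For concave `Z` the same holds with `k` and `k + 1` exchanged. Summing, the `g`-terms telescope
away, and the step where `p` first (resp. last) leaves `0` is strict.
-/

open Real Set

section Increments

variable {𝕜 : Type*} [Field 𝕜] [LinearOrder 𝕜] [IsStrictOrderedRing 𝕜] {s : Set 𝕜} {f : 𝕜 → 𝕜}
  {a₁ a₂ b₁ b₂ : 𝕜}

theorem ConvexOn.slope_le_slope (hf : ConvexOn 𝕜 s f) (ha₁ : a₁ ∈ s) (ha₂ : a₂ ∈ s)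
    (hb₁ : b₁ ∈ s) (hb₂ : b₂ ∈ s) (ha : a₁ < a₂) (hb : b₁ < b₂) (h₁ : a₁ ≤ b₁) (h₂ : a₂ ≤ b₂) :
    slope f a₁ a₂ ≤ slope f b₁ b₂ :=
  calc slope f a₁ a₂ ≤ slope f a₁ b₂ :=
        hf.slope_mono ha₁ ⟨ha₂, ha.ne'⟩ ⟨hb₂, (ha.trans_le h₂).ne'⟩ h₂
    _ = slope f b₂ a₁ := slope_comm f a₁ b₂
    _ ≤ slope f b₂ b₁ :=
        hf.slope_mono hb₂ ⟨ha₁, (ha.trans_le h₂).ne⟩ ⟨hb₁, hb.ne⟩ h₁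
    _ = slope f b₁ b₂ := slope_comm f b₂ b₁

theorem ConcaveOn.slope_le_slope (hf : ConcaveOn 𝕜 s f) (ha₁ : a₁ ∈ s) (ha₂ : a₂ ∈ s)
    (hb₁ : b₁ ∈ s) (hb₂ : b₂ ∈ s) (ha : a₁ < a₂) (hb : b₁ < b₂) (h₁ : a₁ ≤ b₁) (h₂ : a₂ ≤ b₂) :
    slope f b₁ b₂ ≤ slope f a₁ a₂ := by
  simpa using hf.neg.slope_le_slope ha₁ ha₂ hb₁ hb₂ ha hb h₁ h₂

theorem sub_le_sub_of_slope_le (hab : slope f a₁ a₂ ≤ slope f b₁ b₂) (hb : 0 ≤ slope f b₁ b₂)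
    (ha : a₁ ≤ a₂) (hlen : a₂ - a₁ ≤ b₂ - b₁) : f a₂ - f a₁ ≤ f b₂ - f b₁ := by
  rw [← vsub_eq_sub, ← vsub_eq_sub (f b₂), ← sub_smul_slope, ← sub_smul_slope, smul_eq_mul,
    smul_eq_mul]
  calc (a₂ - a₁) * slope f a₁ a₂ ≤ (a₂ - a₁) * slope f b₁ b₂ :=
        mul_le_mul_of_nonneg_left hab (sub_nonneg.2 ha)
    _ ≤ (b₂ - b₁) * slope f b₁ b₂ := mul_le_mul_of_nonneg_right hlen hb

theorem ConvexOn.sub_le_sub_of_le (hf : ConvexOn 𝕜 s f) (hfm : MonotoneOn f s) (ha₁ : a₁ ∈ s)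
    (ha₂ : a₂ ∈ s) (hb₁ : b₁ ∈ s) (hb₂ : b₂ ∈ s) (ha : a₁ ≤ a₂) (h₁ : a₁ ≤ b₁)
    (hlen : a₂ - a₁ ≤ b₂ - b₁) : f a₂ - f a₁ ≤ f b₂ - f b₁ := by
  rcases ha.eq_or_lt with rfl | ha
  · simpa using hfm hb₁ hb₂ (by linarith)
  have hb : b₁ < b₂ := by linarith
  exact sub_le_sub_of_slope_le (hf.slope_le_slope ha₁ ha₂ hb₁ hb₂ ha hb h₁ (by linarith))
    (hfm.slope_nonneg hb₁ hb₂) ha.le hlen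

theorem ConcaveOn.sub_le_sub_of_le (hf : ConcaveOn 𝕜 s f) (hfm : MonotoneOn f s) (ha₁ : a₁ ∈ s)
    (ha₂ : a₂ ∈ s) (hb₁ : b₁ ∈ s) (hb₂ : b₂ ∈ s) (ha : a₁ ≤ a₂) (h₂ : b₂ ≤ a₂)
    (hlen : a₂ - a₁ ≤ b₂ - b₁) : f a₂ - f a₁ ≤ f b₂ - f b₁ := by
  rcases ha.eq_or_lt with rfl | ha
  · simpa using hfm hb₁ hb₂ (by linarith)
  have hb : b₁ < b₂ := by linarith
  exact sub_le_sub_of_slope_le (hf.slope_le_slope hb₁ hb₂ ha₁ ha₂ hb ha (by linarith) h₂)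
    (hfm.slope_nonneg hb₁ hb₂) ha.le hlen

end Increments

theorem abs_sub_add_abs_sub_abs_le {p₁ p₂ g₁ g₂ : ℝ}
    (hpos : 0 ≤ p₁ → 0 ≤ g₁ ∧ (p₁ ≤ p₂ → g₁ ≤ g₂))
    (hneg : p₁ ≤ 0 → g₁ ≤ 0 ∧ (p₂ ≤ p₁ → g₂ ≤ g₁)) :
    |p₂ - p₁| + (|g₁| - |g₂|) ≤ |p₂ + g₂ - (p₁ + g₁)| := by
  rcases le_total 0 p₁ with hp | hp <;> rcases le_total p₁ p₂ with hq | hq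
  · obtain ⟨hg₁, hg⟩ := hpos hp
    have hg₂ := hg hq
    rw [abs_of_nonneg (sub_nonneg.2 hq), abs_of_nonneg hg₁, abs_of_nonneg (hg₁.trans hg₂)]
    linarith [le_abs_self (p₂ + g₂ - (p₁ + g₁))]
  · rw [abs_of_nonpos (sub_nonpos.2 hq), abs_of_nonneg (hpos hp).1]
    linarith [le_abs_self g₂, neg_abs_le (p₂ + g₂ - (p₁ + g₁))]
  · rw [abs_of_nonneg (sub_nonneg.2 hq), abs_of_nonpos (hneg hp).1]
    linarith [neg_abs_le g₂, le_abs_self (p₂ + g₂ - (p₁ + g₁))]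
  · obtain ⟨hg₁, hg⟩ := hneg hp
    have hg₂ := hg hq
    rw [abs_of_nonpos (sub_nonpos.2 hq), abs_of_nonpos hg₁, abs_of_nonpos (hg₂.trans hg₁)]
    linarith [neg_abs_le (p₂ + g₂ - (p₁ + g₁))]

theorem StrictMonoOn.abs_sub_sub_abs_sub_lt {s : Set ℝ} {f : ℝ → ℝ} (hf : StrictMonoOn f s)
    {a b : ℝ} (ha : a ∈ s) (hb : b ∈ s) (hab : a ≠ b) :
    |a - b| - |f a - f b| < |a + f a - (b + f b)| := by
  rcases hab.lt_or_gt with h | h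
  · have hf := sub_neg.2 (hf ha hb h)
    rw [abs_of_neg (sub_neg.2 h), abs_of_neg hf, abs_of_neg (by linarith)]
    linarith
  · have hf := sub_pos.2 (hf hb ha h)
    rw [abs_of_pos (sub_pos.2 h), abs_of_pos hf, abs_of_pos (by linarith)]
    linarith

theorem Nat.exists_lt_not_and_succ {P : ℕ → Prop} {K : ℕ} (h₀ : ¬P 0) (h : ∃ k ≤ K, P k) :
    ∃ i < K, ¬P i ∧ P (i + 1) := by
  obtain ⟨k, hkK, hk⟩ := h
  obtain ⟨i, hi, hi₁, hPi₁⟩ := Nat.exists_not_and_succ_of_not_zero_of_exists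
    (p := fun k => k ≤ K ∧ P k) (fun h => h₀ h.2) ⟨k, hkK, hk⟩
  exact ⟨i, hi₁, fun hPi => hi ⟨by omega, hPi⟩, hPi₁⟩

theorem Nat.exists_lt_and_not_succ {P : ℕ → Prop} {K : ℕ} (hK : ¬P K) (h : ∃ k ≤ K, P k) :
    ∃ i < K, P i ∧ ¬P (i + 1) := by
  obtain ⟨k, hkK, hk⟩ := h
  obtain ⟨i, hiK, hi, hi₁⟩ := Nat.exists_lt_not_and_succ (P := fun k => P (K - k)) (K := K)
    (by simpa using hK) ⟨K - k, Nat.sub_le K k, by rwa [Nat.sub_sub_self hkK]⟩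
  refine ⟨K - (i + 1), by omega, hi₁, ?_⟩
  rwa [show K - (i + 1) + 1 = K - i by omega]

def variation (K : ℕ) (p : ℕ → ℝ) : ℝ :=
  ∑ i ∈ Finset.range K, |p (i + 1) - p i|

theorem variation_congr {K : ℕ} {p q : ℕ → ℝ} (h : ∀ k ≤ K, p k = q k) :
    variation K p = variation K q :=
  Finset.sum_congr rfl fun i hi => by
    rw [h i (by simp at hi; omega), h (i + 1) (by simp at hi; omega)]

theorem variation_lt_variation_of_step {K : ℕ} {p q φ : ℕ → ℝ} (hφ : φ 0 = φ K)
    (hle : ∀ i < K, |p (i + 1) - p i| + (φ i - φ (i + 1)) ≤ |q (i + 1) - q i|)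
    (hlt : ∃ i < K, |p (i + 1) - p i| + (φ i - φ (i + 1)) < |q (i + 1) - q i|) :
    variation K p < variation K q := by
  obtain ⟨j, hjK, hj⟩ := hlt
  have := Finset.sum_lt_sum (fun i hi => hle i (Finset.mem_range.1 hi))
    ⟨j, Finset.mem_range.2 hjK, hj⟩
  rwa [Finset.sum_add_distrib, Finset.sum_range_sub', hφ, sub_self, add_zero] at this

section Sequences

variable {s : Set ℝ} {Z : ℝ → ℝ} {u₁ u₂ v₁ v₂ : ℝ}

theorem ConvexOn.variation_step_le (hZ : ConvexOn ℝ s Z) (hZm : MonotoneOn Z s) (hu₁ : u₁ ∈ s)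
    (hu₂ : u₂ ∈ s) (hv₁ : v₁ ∈ s) (hv₂ : v₂ ∈ s) (hu : u₁ ≤ u₂) (hv : v₁ ≤ v₂) :
    |(u₂ - v₂) - (u₁ - v₁)| + (|Z u₁ - Z v₁| - |Z u₂ - Z v₂|) ≤
      |(u₂ + Z u₂ - (v₂ + Z v₂)) - (u₁ + Z u₁ - (v₁ + Z v₁))| := by
  have key := abs_sub_add_abs_sub_abs_le (p₁ := u₁ - v₁) (p₂ := u₂ - v₂)
    (g₁ := Z u₁ - Z v₁) (g₂ := Z u₂ - Z v₂)
    (fun hp => ⟨sub_nonneg.2 (hZm hv₁ hu₁ (by linarith)), fun hq => by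
      linarith [hZ.sub_le_sub_of_le hZm hv₁ hv₂ hu₁ hu₂ hv (by linarith) (by linarith)]⟩)
    (fun hp => ⟨sub_nonpos.2 (hZm hu₁ hv₁ (by linarith)), fun hq => by
      linarith [hZ.sub_le_sub_of_le hZm hu₁ hu₂ hv₁ hv₂ hu (by linarith) (by linarith)]⟩)
  convert key using 2
  ring

theorem ConcaveOn.variation_step_le (hZ : ConcaveOn ℝ s Z) (hZm : MonotoneOn Z s) (hu₁ : u₁ ∈ s)
    (hu₂ : u₂ ∈ s) (hv₁ : v₁ ∈ s) (hv₂ : v₂ ∈ s) (hu : u₁ ≤ u₂) (hv : v₁ ≤ v₂) :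
    |(u₂ - v₂) - (u₁ - v₁)| + (|Z u₂ - Z v₂| - |Z u₁ - Z v₁|) ≤
      |(u₂ + Z u₂ - (v₂ + Z v₂)) - (u₁ + Z u₁ - (v₁ + Z v₁))| := by
  have key := abs_sub_add_abs_sub_abs_le (p₁ := u₂ - v₂) (p₂ := u₁ - v₁)
    (g₁ := Z u₂ - Z v₂) (g₂ := Z u₁ - Z v₁)
    (fun hp => ⟨sub_nonneg.2 (hZm hv₂ hu₂ (by linarith)), fun hq => by
      linarith [hZ.sub_le_sub_of_le hZm hu₁ hu₂ hv₁ hv₂ hu (by linarith) (by linarith)]⟩)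
    (fun hp => ⟨sub_nonpos.2 (hZm hu₂ hv₂ (by linarith)), fun hq => by
      linarith [hZ.sub_le_sub_of_le hZm hv₁ hv₂ hu₁ hu₂ hv (by linarith) (by linarith)]⟩)
  rw [abs_sub_comm (u₁ - v₁), abs_sub_comm (u₁ - v₁ + _)] at key
  convert key using 2
  ring

variable {K : ℕ} {u v : ℕ → ℝ}

theorem ConvexOn.variation_lt (hZ : ConvexOn ℝ s Z) (hZm : StrictMonoOn Z s)
    (hu : ∀ k ≤ K, u k ∈ s) (hv : ∀ k ≤ K, v k ∈ s) (hu' : ∀ k < K, u k ≤ u (k + 1))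
    (hv' : ∀ k < K, v k ≤ v (k + 1)) (h₀ : u 0 = v 0) (hK : u K = v K)
    (hne : ∃ k ≤ K, u k ≠ v k) :
    variation K (fun k => u k - v k) < variation K (fun k => u k + Z (u k) - (v k + Z (v k))) := by
  refine variation_lt_variation_of_step (φ := fun k => |Z (u k) - Z (v k)|) (by simp [h₀, hK])
    (fun i hi => hZ.variation_step_le hZm.monotoneOn (hu i hi.le) (hu (i + 1) hi) (hv i hi.le)
      (hv (i + 1) hi) (hu' i hi) (hv' i hi)) ?_
  obtain ⟨i, hiK, hi, hi₁⟩ :=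
    Nat.exists_lt_not_and_succ (P := fun k => u k ≠ v k) (not_not.2 h₀) hne
  refine ⟨i, hiK, ?_⟩
  rw [not_not.1 hi]
  simpa [← sub_eq_add_neg] using hZm.abs_sub_sub_abs_sub_lt (hu _ hiK) (hv _ hiK) hi₁

theorem ConcaveOn.variation_lt (hZ : ConcaveOn ℝ s Z) (hZm : StrictMonoOn Z s)
    (hu : ∀ k ≤ K, u k ∈ s) (hv : ∀ k ≤ K, v k ∈ s) (hu' : ∀ k < K, u k ≤ u (k + 1))
    (hv' : ∀ k < K, v k ≤ v (k + 1)) (h₀ : u 0 = v 0) (hK : u K = v K)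
    (hne : ∃ k ≤ K, u k ≠ v k) :
    variation K (fun k => u k - v k) < variation K (fun k => u k + Z (u k) - (v k + Z (v k))) := by
  refine variation_lt_variation_of_step (φ := fun k => -|Z (u k) - Z (v k)|) (by simp [h₀, hK])
    (fun i hi => ?_) ?_
  · have := hZ.variation_step_le hZm.monotoneOn (hu i hi.le) (hu (i + 1) hi) (hv i hi.le)
      (hv (i + 1) hi) (hu' i hi) (hv' i hi)
    linarith
  obtain ⟨i, hiK, hi, hi₁⟩ :=
    Nat.exists_lt_and_not_succ (P := fun k => u k ≠ v k) (not_not.2 hK) hne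
  refine ⟨i, hiK, ?_⟩
  rw [not_not.1 hi₁]
  simpa [← sub_eq_add_neg, abs_sub_comm] using
    hZm.abs_sub_sub_abs_sub_lt (hu _ hiK.le) (hv _ hiK.le) hi

end Sequences

section FiringMap

variable {n : ℕ}

-- `padZero θ k` is `θ_k` in the one-based indexing of the paper, extended by `θ₀ = θ_N = 0`.
def padZero (v : Fin n → ℝ) (k : ℕ) : ℝ :=
  if h : k ≠ 0 ∧ k ≤ n then v ⟨k - 1, by omega⟩ else 0

@[simp] theorem padZero_zero (v : Fin n → ℝ) : padZero v 0 = 0 := by simp [padZero]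

@[simp] theorem padZero_succ_self (v : Fin n → ℝ) : padZero v (n + 1) = 0 := by simp [padZero]

theorem padZero_succ (v : Fin n → ℝ) {k : ℕ} (hk : k < n) : padZero v (k + 1) = v ⟨k, hk⟩ := by
  simp [padZero, Nat.succ_le_of_lt hk]

theorem padZero_sub (v w : Fin n → ℝ) (k : ℕ) :
    padZero (v - w) k = padZero v k - padZero w k := by
  unfold padZero; split_ifs <;> simp

theorem padZero_mono {v : Fin n → ℝ} (hv₀ : ∀ i, 0 ≤ v i) (hv : Monotone v) {j k : ℕ}
    (hjk : j ≤ k) (hk : k ≤ n) : padZero v j ≤ padZero v k := by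
  unfold padZero
  split_ifs with hj hk' hk'
  · exact hv (Fin.mk_le_mk.2 (by omega))
  · omega
  · exact hv₀ _
  · rfl

theorem norm1_eq_variation_padZero (v : Fin n → ℝ) : norm1 v = variation (n + 1) (padZero v) := by
  rcases n with _ | m
  · simp [norm1, variation]
  · have hsum : ∑ k : Fin (m + 1 - 1), |v ⟨k, by omega⟩ - v ⟨k + 1, by omega⟩| =
        ∑ k ∈ Finset.range m, |padZero v (k + 1 + 1) - padZero v (k + 1)| := by
      rw [← Fin.sum_univ_eq_sum_range (fun k => |padZero v (k + 1 + 1) - padZero v (k + 1)|)]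
      refine Finset.sum_congr rfl fun k _ => ?_
      rw [abs_sub_comm, padZero_succ v (k := k + 1) (by omega), padZero_succ v (k := k) (by omega)]
    rw [norm1, dif_pos m.succ_pos, hsum, variation, Finset.sum_range_succ, Finset.sum_range_succ',
      padZero_succ_self, padZero_zero, padZero_succ v m.succ_pos, padZero_succ v m.lt_succ_self]
    simp only [sub_zero, zero_sub, abs_neg, Nat.add_sub_cancel]
    ring

noncomputable def firingPhases (x : Fin n → ℝ) (k : ℕ) : ℝ :=
  if k = 0 then 0 else 2 * π - padZero x n + padZero x (k - 1)

@[simp] theorem firingPhases_zero (x : Fin n → ℝ) : firingPhases x 0 = 0 := if_pos rfl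

theorem firingPhases_succ (x : Fin n → ℝ) (k : ℕ) :
    firingPhases x (k + 1) = 2 * π - padZero x n + padZero x k := by
  simp [firingPhases]

theorem firingMap_apply_s1 (Z : ℝ → ℝ) (x : Fin n → ℝ) (i : Fin n) :
    firingMap Z x i = firingPhases x (i + 1) + Z (firingPhases x (i + 1)) := by
  have hn := i.pos
  have hlast : padZero x n = x ⟨n - 1, by omega⟩ := by
    simpa [Nat.sub_add_cancel hn] using padZero_succ x (k := n - 1) (by omega)
  rw [firingPhases_succ, hlast, firingMap, firingScalar]
  rcases i with ⟨_ | j, hj⟩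
  · simp
  · simp only [dif_neg j.succ_ne_zero, Nat.add_sub_cancel, padZero_succ x (k := j) (by omega),
      ← sub_add]

theorem padZero_firingMap_sub (Z : ℝ → ℝ) (x y : Fin n → ℝ) {k : ℕ} (hk : k ≤ n + 1) :
    padZero (firingMap Z x - firingMap Z y) k =
      firingPhases x k + Z (firingPhases x k) - (firingPhases y k + Z (firingPhases y k)) := by
  rcases k with _ | k
  · simp
  rcases (Nat.lt_succ_iff.1 hk).lt_or_eq with hk | rfl
  · rw [padZero_succ _ hk, Pi.sub_apply, firingMap_apply_s1, firingMap_apply_s1]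
  · simp [firingPhases_succ]

theorem norm1_firingMap_sub (Z : ℝ → ℝ) (x y : Fin n → ℝ) :
    norm1 (firingMap Z x - firingMap Z y) = variation (n + 1) (fun k =>
      firingPhases x k + Z (firingPhases x k) - (firingPhases y k + Z (firingPhases y k))) := by
  rw [norm1_eq_variation_padZero]
  exact variation_congr fun k hk => padZero_firingMap_sub Z x y hk

theorem norm1_sub_eq_variation_firingPhases (x y : Fin n → ℝ) :
    norm1 (x - y) = variation (n + 1) (fun k => firingPhases x k - firingPhases y k) := by
  rw [norm1_eq_variation_padZero, variation, variation, Finset.sum_range_succ,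
    Finset.sum_range_succ']
  simp only [firingPhases_succ, firingPhases_zero, padZero_sub, padZero_zero, padZero_succ_self]
  congr 1
  · refine Finset.sum_congr rfl fun i _ => ?_
    congr 1
    ring
  · congr 1
    ring

theorem exists_firingPhases_ne {x y : Fin n → ℝ} (hxy : x ≠ y) :
    ∃ k ≤ n + 1, firingPhases x k ≠ firingPhases y k := by
  by_contra! h
  have hlast : padZero x n = padZero y n := by
    simpa [firingPhases_succ] using h 1 (by omega)
  refine hxy (funext fun i => ?_)
  simpa [firingPhases_succ, hlast, padZero_succ _ i.isLt] using h (i + 2) (by omega)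

theorem firingPhases_mem_Icc {x : Fin n → ℝ} (hx : x ∈ firingCone) {k : ℕ} (hk : k ≤ n + 1) :
    firingPhases x k ∈ Icc 0 (2 * π) := by
  obtain ⟨hpos, hmono, hlt⟩ := hx
  have hlast : padZero x n ≤ 2 * π := by
    unfold padZero
    split_ifs
    exacts [(hlt _).le, by positivity]
  rcases k with _ | k
  · simp [pi_pos.le]
  have h₀ := padZero_mono (fun i => (hpos i).le) hmono.monotone (Nat.zero_le k) (by omega)
  have h₁ := padZero_mono (fun i => (hpos i).le) hmono.monotone (by omega : k ≤ n) le_rfl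
  rw [padZero_zero] at h₀
  rw [firingPhases_succ]
  constructor <;> linarith

theorem firingPhases_le_succ {x : Fin n → ℝ} (hx : x ∈ firingCone) {k : ℕ} (hk : k ≤ n) :
    firingPhases x k ≤ firingPhases x (k + 1) := by
  rcases k with _ | k
  · simpa using (firingPhases_mem_Icc hx (k := 1) (by omega)).1
  rw [firingPhases_succ, firingPhases_succ]
  have := padZero_mono (fun i => (hx.1 i).le) hx.2.1.monotone (Nat.le_succ k) hk
  linarith

theorem norm1_sub_lt_norm1_firingMap_sub {Z : ℝ → ℝ} (hZm : StrictMonoOn Z (Icc 0 (2 * π)))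
    (hZ : ConvexOn ℝ (Icc 0 (2 * π)) Z ∨ ConcaveOn ℝ (Icc 0 (2 * π)) Z) {x y : Fin n → ℝ}
    (hx : x ∈ firingCone) (hy : y ∈ firingCone) (hxy : x ≠ y) :
    norm1 (x - y) < norm1 (firingMap Z x - firingMap Z y) := by
  rw [norm1_sub_eq_variation_firingPhases, norm1_firingMap_sub]
  have hu := fun k (hk : k ≤ n + 1) => firingPhases_mem_Icc hx hk
  have hv := fun k (hk : k ≤ n + 1) => firingPhases_mem_Icc hy hk
  have hu' := fun k (hk : k < n + 1) => firingPhases_le_succ hx (Nat.lt_succ_iff.1 hk)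
  have hv' := fun k (hk : k < n + 1) => firingPhases_le_succ hy (Nat.lt_succ_iff.1 hk)
  have h₀ : firingPhases x 0 = firingPhases y 0 := by simp
  have hK : firingPhases x (n + 1) = firingPhases y (n + 1) := by simp [firingPhases_succ]
  rcases hZ with hZ | hZ
  exacts [hZ.variation_lt hZm hu hv hu' hv' h₀ hK (exists_firingPhases_ne hxy),
    hZ.variation_lt hZm hu hv hu' hv' h₀ hK (exists_firingPhases_ne hxy)]

end FiringMap

theorem firing_map_expanding_general
    (N : ℕ) (Z : ℝ → ℝ)
    (hZC2 : ContDiffOn ℝ 2 Z (Icc 0 (2 * π)))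
    (hZmono : ∀ θ ∈ Ioo (0 : ℝ) (2 * π), 0 < deriv Z θ)
    (hZconv : (∀ θ ∈ Ioo (0 : ℝ) (2 * π), 0 < deriv (deriv Z) θ) ∨
              (∀ θ ∈ Ioo (0 : ℝ) (2 * π), deriv (deriv Z) θ < 0))
    (x y : Fin (N - 1) → ℝ)
    (hx : x ∈ firingCone) (hy : y ∈ firingCone) (hxy : x ≠ y) :
    norm1 (x - y) < norm1 (firingMap Z x - firingMap Z y) := by
  have hcont : ContinuousOn Z (Icc 0 (2 * π)) := hZC2.continuousOn
  have hZm : StrictMonoOn Z (Icc 0 (2 * π)) :=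
    strictMonoOn_of_deriv_pos (convex_Icc _ _) hcont (by rwa [interior_Icc])
  have hZ : ConvexOn ℝ (Icc 0 (2 * π)) Z ∨ ConcaveOn ℝ (Icc 0 (2 * π)) Z := by
    refine hZconv.imp (fun h => ?_) (fun h => ?_)
    · exact (strictConvexOn_of_deriv2_pos (convex_Icc _ _) hcont (by simpa using h)).convexOn
    · exact (strictConcaveOn_of_deriv2_neg (convex_Icc _ _) hcont (by simpa using h)).concaveOn
  exact norm1_sub_lt_norm1_firingMap_sub hZm hZ hx hy hxy

/-- Theorem (firing map contraction for monotone decreasing PRC):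
if the finite PRC `Z` is C², order-preserving (`Z' > −1`), monotone increasing
(`Z' > 0`) and of constant convexity on `(0,2π)`, then the `(N−1)`-dimensional
firing map is expanding on the cone with respect to the 1-norm. -/
theorem firing_map_expanding
    (N : ℕ) (hN : 1 < N) (Z : ℝ → ℝ)
    (hZC2 : ContDiffOn ℝ 2 Z (Icc 0 (2 * π)))
    (hZord : ∀ θ ∈ Ioo (0 : ℝ) (2 * π), -1 < deriv Z θ)
    (hZmono : ∀ θ ∈ Ioo (0 : ℝ) (2 * π), 0 < deriv Z θ)
    (hZconv : (∀ θ ∈ Ioo (0 : ℝ) (2 * π), 0 < deriv (deriv Z) θ) ∨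
              (∀ θ ∈ Ioo (0 : ℝ) (2 * π), deriv (deriv Z) θ < 0))
    (x y : Fin (N - 1) → ℝ)
    (hx : x ∈ firingCone) (hy : y ∈ firingCone) (hxy : x ≠ y)
    (hHx : firingMap Z x ∈ firingCone) (hHy : firingMap Z y ∈ firingCone) :
    norm1 (x - y) < norm1 (firingMap Z x - firingMap Z y) :=
  firing_map_expanding_general N Z hZC2 hZmono hZconv x y hx hy hxy
end

section
/- Let N > 1 and let Z : [0,2π] → ℝ be a twice continuously differentiable finite phase response curve satisfying Z'(θ) > −1, Z'(θ) < 0, and either Z''(θ) > 0 for all θ ∈ (0,2π) or Z''(θ) < 0 for all θ ∈ (0,2π). Then the (N−1)-dimensional firing map H has at most one fixed point in the cone C_N (i.e., the phase-locked configuration of the network of N impulsively coupled oscillators is isolated/unique). -/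
open Real Set

/-
On `(0, 2π)` the scalar firing map is `h(θ) = g(2π − θ)` with `g(u) = u + Z(u)`, and `Z' > −1`
makes `g` increasing, so `h` is antitone. A fixed point `θ` of `H` in the cone is then
determined recursively by its last coordinate `θ_L`: `θ₁ = h(θ_L)` and `θ_{k+1} = h(θ_L − θ_k)`.
Induction along this recursion shows that for two fixed points, `θ_L ≤ φ_L` forces `φ ≤ θ`
coordinatewise; applied at the last coordinate and then in both directions it gives `θ = φ`.
-/

lemma monotoneOn_add_self_of_neg_one_le_deriv {Z : ℝ → ℝ} {s : Set ℝ} (hs : Convex ℝ s)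
    (hZc : ContinuousOn Z s) (hZd : DifferentiableOn ℝ Z (interior s))
    (hZ' : ∀ θ ∈ interior s, -1 ≤ deriv Z θ) :
    MonotoneOn (fun u => u + Z u) s := by
  refine monotoneOn_of_deriv_nonneg hs (continuousOn_id.add hZc)
    (differentiableOn_id.add hZd) fun θ hθ => ?_
  have hderiv : deriv (fun u => u + Z u) θ = 1 + deriv Z θ :=
    ((hasDerivAt_id θ).add ((hZd θ hθ).differentiableAt
      (isOpen_interior.mem_nhds hθ)).hasDerivAt).deriv
  rw [hderiv]
  linarith [hZ' θ hθ]

lemma firingScalar_antitoneOn {Z : ℝ → ℝ}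
    (hZ : MonotoneOn (fun u => u + Z u) (Ioo 0 (2 * π))) :
    AntitoneOn (firingScalar Z) (Ioo 0 (2 * π)) := fun a ha b hb hab =>
  hZ ⟨by linarith [hb.2], by linarith [hb.1]⟩ ⟨by linarith [ha.2], by linarith [ha.1]⟩
    (by linarith)

section FixedPoints

variable {Z : ℝ → ℝ} {n : ℕ}

lemma firingMap_apply_zero (x : Fin (n + 1) → ℝ) :
    firingMap Z x 0 = firingScalar Z (x (Fin.last n)) := by
  simp [firingMap, Fin.last]

lemma firingMap_apply_succ (x : Fin (n + 1) → ℝ) (i : Fin n) :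
    firingMap Z x i.succ = firingScalar Z (x (Fin.last n) - x i.castSucc) := by
  simp [firingMap, Fin.last, Fin.castSucc, Fin.castAdd, Fin.castLE]

lemma mem_Ioo_of_mem_firingCone {m : ℕ} {x : Fin m → ℝ} (hx : x ∈ firingCone) (i : Fin m) :
    x i ∈ Ioo 0 (2 * π) :=
  ⟨hx.1 i, hx.2.2 i⟩

lemma last_sub_mem_Ioo_of_mem_firingCone {x : Fin (n + 1) → ℝ} (hx : x ∈ firingCone)
    (i : Fin n) : x (Fin.last n) - x i.castSucc ∈ Ioo 0 (2 * π) :=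
  ⟨sub_pos.2 (hx.2.1 i.castSucc_lt_last), by linarith [hx.1 i.castSucc, hx.2.2 (Fin.last n)]⟩

lemma le_of_firingMap_eq_self_of_last_le (hZ : AntitoneOn (firingScalar Z) (Ioo 0 (2 * π)))
    {x y : Fin (n + 1) → ℝ} (hx : x ∈ firingCone) (hy : y ∈ firingCone)
    (hfx : firingMap Z x = x) (hfy : firingMap Z y = y) (hlast : x (Fin.last n) ≤ y (Fin.last n)) :
    y ≤ x := by
  intro i
  induction i using Fin.induction with
  | zero =>
    rw [← hfx, ← hfy, firingMap_apply_zero, firingMap_apply_zero]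
    exact hZ (mem_Ioo_of_mem_firingCone hx _) (mem_Ioo_of_mem_firingCone hy _) hlast
  | succ i ih =>
    rw [← hfx, ← hfy, firingMap_apply_succ, firingMap_apply_succ]
    exact hZ (last_sub_mem_Ioo_of_mem_firingCone hx i) (last_sub_mem_Ioo_of_mem_firingCone hy i)
      (by linarith)

lemma eq_of_firingMap_eq_self (hZ : AntitoneOn (firingScalar Z) (Ioo 0 (2 * π)))
    {m : ℕ} {x y : Fin m → ℝ} (hx : x ∈ firingCone) (hy : y ∈ firingCone)
    (hfx : firingMap Z x = x) (hfy : firingMap Z y = y) : x = y := by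
  cases m with
  | zero => exact Subsingleton.elim x y
  | succ n =>
    wlog hlast : x (Fin.last n) ≤ y (Fin.last n) generalizing x y
    · exact (this hy hx hfy hfx (le_of_not_ge hlast)).symm
    have hyx := le_of_firingMap_eq_self_of_last_le hZ hx hy hfx hfy hlast
    exact le_antisymm (le_of_firingMap_eq_self_of_last_le hZ hy hx hfy hfx (hyx _)) hyx

end FixedPoints

theorem firing_map_unique_fixed_point_general
    (N : ℕ) (Z : ℝ → ℝ)
    (hZC2 : ContDiffOn ℝ 2 Z (Icc 0 (2 * π)))
    (hZord : ∀ θ ∈ Ioo (0 : ℝ) (2 * π), -1 < deriv Z θ)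
    (x y : Fin (N - 1) → ℝ)
    (hx : x ∈ firingCone) (hy : y ∈ firingCone)
    (hfx : firingMap Z x = x) (hfy : firingMap Z y = y) :
    x = y := by
  have hZd : DifferentiableOn ℝ Z (Ioo 0 (2 * π)) :=
    (hZC2.differentiableOn (by norm_num)).mono Ioo_subset_Icc_self
  have hmono : MonotoneOn (fun u => u + Z u) (Ioo 0 (2 * π)) :=
    monotoneOn_add_self_of_neg_one_le_deriv (convex_Ioo _ _) hZd.continuousOn
      (by rwa [interior_Ioo]) fun θ hθ => (hZord θ (by rwa [interior_Ioo] at hθ)).le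
  exact eq_of_firingMap_eq_self (firingScalar_antitoneOn hmono) hx hy hfx hfy

/-- Theorem (uniqueness of the phase-locked configuration):
if the finite PRC `Z` is C², order-preserving (`Z' > −1`), monotone decreasing
(`Z' < 0`) and of constant convexity on `(0,2π)`, then the `(N−1)`-dimensional
firing map has at most one fixed point in the cone. -/
theorem firing_map_unique_fixed_point
    (N : ℕ) (hN : 1 < N) (Z : ℝ → ℝ)
    (hZC2 : ContDiffOn ℝ 2 Z (Icc 0 (2 * π)))
    (hZord : ∀ θ ∈ Ioo (0 : ℝ) (2 * π), -1 < deriv Z θ)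
    (hZmono : ∀ θ ∈ Ioo (0 : ℝ) (2 * π), deriv Z θ < 0)
    (hZconv : (∀ θ ∈ Ioo (0 : ℝ) (2 * π), 0 < deriv (deriv Z) θ) ∨
              (∀ θ ∈ Ioo (0 : ℝ) (2 * π), deriv (deriv Z) θ < 0))
    (x y : Fin (N - 1) → ℝ)
    (hx : x ∈ firingCone) (hy : y ∈ firingCone)
    (hfx : firingMap Z x = x) (hfy : firingMap Z y = y) :
    x = y :=
  firing_map_unique_fixed_point_general N Z hZC2 hZord x y hx hy hfx hfy
end

section
/- Let μ > 0, K > 0, and let (x₁, w₁, x₂, w₂) : I → ℝ⁴ be a differentiable solution of the resistively coupled van der Pol system ẋᵢ = −wᵢ + μ(xᵢ − xᵢ³/3) + K(x_j − xᵢ), ẇᵢ = xᵢ, for (i,j) ∈ {(1,2),(2,1)}. Define the incremental Lyapunov function V(t) = ½((x₁(t) − x₂(t))² + (w₁(t) − w₂(t))²). Then for all t ∈ I, V'(t) ≤ (μ − 2K)·(x₁(t) − x₂(t))². -/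
/-!
In `V̇ = e ė + f ḟ` with `e = x₁ - x₂`, `f = w₁ - w₂`, the cross terms `∓ e f` from the inductors
cancel, the linear terms give `(μ - 2K) e²`, and the cubic term gives `-(μ/3) e (x₁³ - x₂³) ≤ 0`
because `s ↦ s³` is monotone.
-/

theorem hasDerivAt_half_mul_sq_add_sq {e f : ℝ → ℝ} {e' f' t : ℝ}
    (he : HasDerivAt e e' t) (hf : HasDerivAt f f' t) :
    HasDerivAt (fun s => 1 / 2 * (e s ^ 2 + f s ^ 2)) (e t * e' + f t * f') t :=
  (((he.pow 2).add (hf.pow 2)).const_mul (1 / 2 : ℝ)).congr_deriv (by ring)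

theorem sub_mul_sub_pow_three_nonneg {R : Type*} [Ring R] [LinearOrder R] [IsStrictOrderedRing R]
    (a b : R) : 0 ≤ (a - b) * (a ^ 3 - b ^ 3) :=
  (monotone_id.monovary (Odd.strictMono_pow (by decide : Odd 3)).monotone).sub_mul_sub_nonneg b a

theorem coupled_vdp_incremental_energy_rate_le {μ : ℝ} (hμ : 0 ≤ μ) (K x₁ w₁ x₂ w₂ : ℝ) :
    (x₁ - x₂) * ((-w₁ + μ * (x₁ - x₁ ^ 3 / 3) + K * (x₂ - x₁)) -
        (-w₂ + μ * (x₂ - x₂ ^ 3 / 3) + K * (x₁ - x₂))) + (w₁ - w₂) * (x₁ - x₂) ≤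
      (μ - 2 * K) * (x₁ - x₂) ^ 2 := by
  have hcubic := mul_nonneg hμ (sub_mul_sub_pow_three_nonneg x₁ x₂)
  linear_combination (1 / 3 : ℝ) * hcubic

theorem coupled_vdp_lyapunov_general
    (μ K : ℝ) (hμ : 0 < μ)
    (I : Set ℝ) (x₁ w₁ x₂ w₂ : ℝ → ℝ)
    (hx₁ : ∀ t ∈ I, HasDerivAt x₁
      (-w₁ t + μ * (x₁ t - (x₁ t) ^ 3 / 3) + K * (x₂ t - x₁ t)) t)
    (hw₁ : ∀ t ∈ I, HasDerivAt w₁ (x₁ t) t)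
    (hx₂ : ∀ t ∈ I, HasDerivAt x₂
      (-w₂ t + μ * (x₂ t - (x₂ t) ^ 3 / 3) + K * (x₁ t - x₂ t)) t)
    (hw₂ : ∀ t ∈ I, HasDerivAt w₂ (x₂ t) t) :
    ∀ t ∈ I, ∃ d : ℝ,
      HasDerivAt (fun s => (1 / 2) * ((x₁ s - x₂ s) ^ 2 + (w₁ s - w₂ s) ^ 2)) d t ∧
      d ≤ (μ - 2 * K) * (x₁ t - x₂ t) ^ 2 := fun t ht =>
  ⟨_, hasDerivAt_half_mul_sq_add_sq ((hx₁ t ht).sub (hx₂ t ht)) ((hw₁ t ht).sub (hw₂ t ht)),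
    coupled_vdp_incremental_energy_rate_le hμ.le K _ _ _ _⟩

/-- Theorem (incremental Lyapunov inequality for resistively coupled van der
Pol oscillators): along any solution of the coupled system, the incremental
Lyapunov function `V = ½((x₁−x₂)² + (w₁−w₂)²)` satisfies
`V̇ ≤ (μ − 2K)(x₁−x₂)²`. -/
theorem coupled_vdp_lyapunov
    (μ K : ℝ) (hμ : 0 < μ) (hK : 0 < K)
    (I : Set ℝ) (x₁ w₁ x₂ w₂ : ℝ → ℝ)
    (hx₁ : ∀ t ∈ I, HasDerivAt x₁
      (-w₁ t + μ * (x₁ t - (x₁ t) ^ 3 / 3) + K * (x₂ t - x₁ t)) t)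
    (hw₁ : ∀ t ∈ I, HasDerivAt w₁ (x₁ t) t)
    (hx₂ : ∀ t ∈ I, HasDerivAt x₂
      (-w₂ t + μ * (x₂ t - (x₂ t) ^ 3 / 3) + K * (x₁ t - x₂ t)) t)
    (hw₂ : ∀ t ∈ I, HasDerivAt w₂ (x₂ t) t) :
    ∀ t ∈ I, ∃ d : ℝ,
      HasDerivAt (fun s => (1 / 2) * ((x₁ s - x₂ s) ^ 2 + (w₁ s - w₂ s) ^ 2)) d t ∧
      d ≤ (μ - 2 * K) * (x₁ t - x₂ t) ^ 2 :=
  coupled_vdp_lyapunov_general μ K hμ I x₁ w₁ x₂ w₂ hx₁ hw₁ hx₂ hw₂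
end

section
/- Let μ > 0 and K > 0 with 2K > μ, and let (x₁, w₁, x₂, w₂) : [0,∞) → ℝ⁴ be a differentiable solution of the resistively coupled van der Pol system ẋᵢ = −wᵢ + μ(xᵢ − xᵢ³/3) + K(x_j − xᵢ), ẇᵢ = xᵢ, for (i,j) ∈ {(1,2),(2,1)}. Then the two oscillators synchronize: lim_{t→∞} (x₁(t) − x₂(t)) = 0 and lim_{t→∞} (w₁(t) − w₂(t)) = 0. -/
/-!
The differences `e = x₁ - x₂`, `η = w₁ - w₂` obey `ė = -η - h e`, `η̇ = e` with damping
`h = 2K - μ + μ (x₁² + x₁x₂ + x₂²)/3 ≥ 2K - μ > 0`. The damping is not bounded a priori, but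
`x² - x⁴/3 ≤ 3/4` makes the total energy grow at most linearly, so `h t ≤ a + b t`.
For such an oscillator `e² + η²` is nonincreasing, and with `ψ t = (a + b t)⁻¹` the function
`Φ = (1 + k)(e² + η²)/2 + 2Mψ + 2eηψ` is nonnegative with `Φ' ≤ -(e² + η²)ψ`;
since `∫ ψ` diverges, `e² + η²` cannot stay above any `ε > 0`.
-/

open Real Set Filter

theorem antitoneOn_Ici_of_hasDerivAt_nonpos {f f' : ℝ → ℝ} {a : ℝ}
    (hf : ∀ t ∈ Ici a, HasDerivAt f (f' t) t) (hf' : ∀ t ∈ Ici a, f' t ≤ 0) :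
    AntitoneOn f (Ici a) := by
  refine antitoneOn_of_hasDerivWithinAt_nonpos (f' := f') (convex_Ici a)
    (fun t ht => (hf t ht).continuousAt.continuousWithinAt) (fun t ht => ?_) fun t ht => ?_
  all_goals rw [interior_Ici] at ht
  · exact (hf t (mem_Ici_of_Ioi ht)).hasDerivWithinAt
  · exact hf' t (mem_Ici_of_Ioi ht)

theorem sub_le_sub_of_hasDerivAt_le {f g f' g' : ℝ → ℝ} {a : ℝ}
    (hf : ∀ t ∈ Ici a, HasDerivAt f (f' t) t) (hg : ∀ t ∈ Ici a, HasDerivAt g (g' t) t)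
    (hle : ∀ t ∈ Ici a, f' t ≤ g' t) {t : ℝ} (ht : a ≤ t) :
    f t - f a ≤ g t - g a := by
  have := antitoneOn_Ici_of_hasDerivAt_nonpos (f := fun s => f s - g s)
    (fun s hs => (hf s hs).sub (hg s hs)) (fun s hs => sub_nonpos.2 (hle s hs))
    self_mem_Ici ht ht
  linarith

theorem exists_lt_of_hasDerivAt_le_neg_div_affine {Φ Φ' W : ℝ → ℝ} {a b ε : ℝ}
    (ha : 0 < a) (hb : 0 < b) (hε : 0 < ε)
    (hΦ : ∀ t ∈ Ici 0, HasDerivAt Φ (Φ' t) t) (hΦ_nonneg : ∀ t ∈ Ici 0, 0 ≤ Φ t)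
    (hΦ' : ∀ t ∈ Ici 0, Φ' t ≤ -(W t / (a + b * t))) :
    ∃ t ∈ Ici 0, W t < ε := by
  by_contra! hW
  have hpos : ∀ t ∈ Ici (0 : ℝ), 0 < a + b * t := fun t ht => by
    have : 0 ≤ b * t := mul_nonneg hb.le ht; linarith
  have hlog : ∀ t ∈ Ici (0 : ℝ),
      HasDerivAt (fun s => -(ε / b * log (a + b * s))) (-(ε / (a + b * t))) t := by
    intro t ht
    have := ((((hasDerivAt_id' t).const_mul b).const_add a).log (hpos t ht).ne').const_mul (ε / b)
    exact this.neg.congr_deriv (by field_simp)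
  have hbound : ∀ t ∈ Ici (0 : ℝ), ε / b * log (a + b * t) ≤ Φ 0 + ε / b * log a := by
    intro t ht
    have := sub_le_sub_of_hasDerivAt_le hΦ hlog (fun s hs => ?_) ht
    · simp only [mul_zero, add_zero] at this
      linarith [hΦ_nonneg t ht]
    · calc Φ' s ≤ -(W s / (a + b * s)) := hΦ' s hs
        _ ≤ -(ε / (a + b * s)) := by gcongr; exacts [(hpos s hs).le, hW s hs]
  have hunbdd : Tendsto (fun t => ε / b * log (a + b * t)) atTop atTop :=
    (tendsto_log_atTop.comp (tendsto_atTop_add_const_left _ a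
      (tendsto_id.const_mul_atTop hb))).const_mul_atTop (div_pos hε hb)
  obtain ⟨t, ht, hlt⟩ := ((hunbdd.eventually_gt_atTop (Φ 0 + ε / b * log a)).and
    (eventually_ge_atTop 0)).exists
  exact absurd (hbound t hlt) (not_le.2 ht)

theorem tendsto_zero_of_antitoneOn_of_exists_lt {W : ℝ → ℝ} (hW : AntitoneOn W (Ici 0))
    (hW_nonneg : ∀ t ∈ Ici 0, 0 ≤ W t) (hlt : ∀ ε > 0, ∃ t ∈ Ici 0, W t < ε) :
    Tendsto W atTop (nhds 0) := by
  refine tendsto_order.2 ⟨fun ε hε => ?_, fun ε hε => ?_⟩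
  · filter_upwards [eventually_ge_atTop 0] with t ht using hε.trans_le (hW_nonneg t ht)
  · obtain ⟨t₀, ht₀, hlt₀⟩ := hlt ε hε
    filter_upwards [eventually_ge_atTop t₀] with t ht
    exact (hW ht₀ (mem_Ici.2 (le_trans ht₀ ht)) ht).trans_lt hlt₀

theorem tendsto_zero_of_sq_le {α : Type*} {l : Filter α} {f g : α → ℝ}
    (hg : Tendsto g l (nhds 0)) (hfg : ∀ᶠ x in l, f x ^ 2 ≤ g x) : Tendsto f l (nhds 0) :=
  squeeze_zero_norm' (hfg.mono fun _ h => abs_le_sqrt h) (by simpa using hg.sqrt)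

theorem damped_lyapunov_deriv_le {e η h p b k M : ℝ} (hh : 0 ≤ h) (hb : 0 ≤ b) (hp : 0 < p)
    (hhp : h * p ≤ 1) (hkh : 3 * p ≤ k * h) (hM : e ^ 2 + η ^ 2 ≤ M) :
    -((1 + k) * (h * e ^ 2)) - 2 * M * (b * p ^ 2)
        + 2 * ((-η - h * e) * η * p + e * e * p - e * η * (b * p ^ 2))
      ≤ -((e ^ 2 + η ^ 2) * p) := by
  have h_damp : 3 * e ^ 2 * p ≤ k * h * e ^ 2 := by nlinarith [sq_nonneg e]
  have h_cross : -(2 * h * e * η * p) ≤ h * e ^ 2 + η ^ 2 * p := by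
    have : h * (η * p) ^ 2 ≤ η ^ 2 * p := by
      have := mul_le_mul_of_nonneg_right hhp (mul_nonneg (sq_nonneg η) hp.le)
      linarith
    nlinarith [mul_nonneg hh (sq_nonneg (e + η * p))]
  have hq : 0 ≤ b * p ^ 2 := by positivity
  have h_weight : -(2 * e * η * (b * p ^ 2)) ≤ M * (b * p ^ 2) := by
    nlinarith [mul_nonneg hq (sq_nonneg (e + η)), mul_le_mul_of_nonneg_right hM hq]
  have hMq : 0 ≤ M * (b * p ^ 2) := mul_nonneg (by nlinarith [sq_nonneg e, sq_nonneg η]) hq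
  linarith

section DampedOscillator

variable {e η h : ℝ → ℝ}

theorem hasDerivAt_damped_energy (he : ∀ t ∈ Ici (0 : ℝ), HasDerivAt e (-η t - h t * e t) t)
    (hη : ∀ t ∈ Ici (0 : ℝ), HasDerivAt η (e t) t) :
    ∀ t ∈ Ici (0 : ℝ), HasDerivAt (fun s => e s ^ 2 + η s ^ 2) (-(2 * (h t * e t ^ 2))) t :=
  fun t ht => (((he t ht).pow 2).add ((hη t ht).pow 2)).congr_deriv (by ring)

theorem damped_energy_antitoneOn (he : ∀ t ∈ Ici (0 : ℝ), HasDerivAt e (-η t - h t * e t) t)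
    (hη : ∀ t ∈ Ici (0 : ℝ), HasDerivAt η (e t) t) (hh : ∀ t ∈ Ici (0 : ℝ), 0 ≤ h t) :
    AntitoneOn (fun s => e s ^ 2 + η s ^ 2) (Ici 0) :=
  antitoneOn_Ici_of_hasDerivAt_nonpos (hasDerivAt_damped_energy he hη) fun t ht => by
    have := hh t ht; have := sq_nonneg (e t); simp only [neg_nonpos]; positivity

theorem exists_damped_energy_lt {a b c ε : ℝ} (ha : 0 < a) (hb : 0 < b) (hc : 0 < c)
    (hε : 0 < ε) (hch : ∀ t ∈ Ici (0 : ℝ), c ≤ h t) (hha : ∀ t ∈ Ici (0 : ℝ), h t ≤ a + b * t)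
    (he : ∀ t ∈ Ici (0 : ℝ), HasDerivAt e (-η t - h t * e t) t)
    (hη : ∀ t ∈ Ici (0 : ℝ), HasDerivAt η (e t) t) :
    ∃ t ∈ Ici 0, e t ^ 2 + η t ^ 2 < ε := by
  set M := e 0 ^ 2 + η 0 ^ 2
  set k := 3 / (a * c)
  set ψ : ℝ → ℝ := fun s => (a + b * s)⁻¹
  have hpos : ∀ t ∈ Ici (0 : ℝ), 0 < a + b * t := fun t ht => by
    have : 0 ≤ b * t := mul_nonneg hb.le ht; linarith
  have hh : ∀ t ∈ Ici (0 : ℝ), 0 ≤ h t := fun t ht => hc.le.trans (hch t ht)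
  have hM : ∀ t ∈ Ici (0 : ℝ), e t ^ 2 + η t ^ 2 ≤ M := fun t ht =>
    damped_energy_antitoneOn he hη hh self_mem_Ici ht ht
  have hψ : ∀ t ∈ Ici (0 : ℝ), HasDerivAt ψ (-(b * ψ t ^ 2)) t := fun t ht =>
    ((((hasDerivAt_id' t).const_mul b).const_add a).inv (hpos t ht).ne').congr_deriv (by
      simp only [ψ]; field_simp)
  -- Only `e` is damped; the cross term `e η ψ` transfers that dissipation to `η`.
  refine exists_lt_of_hasDerivAt_le_neg_div_affine ha hb hε
    (Φ := fun s => (1 + k) * ((e s ^ 2 + η s ^ 2) / 2) + 2 * M * ψ s + 2 * (e s * η s * ψ s))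
    (fun t ht => ((((hasDerivAt_damped_energy he hη t ht).div_const 2).const_mul (1 + k)).add
      ((hψ t ht).const_mul (2 * M))).add ((((he t ht).mul (hη t ht)).mul (hψ t ht)).const_mul 2))
    (fun t ht => ?_) (fun t ht => ?_)
  · have hψt : 0 < ψ t := inv_pos.2 (hpos t ht)
    have hk : 0 ≤ k := by positivity
    have := hM t ht
    nlinarith [sq_nonneg (e t + η t),
      mul_nonneg hk (add_nonneg (sq_nonneg (e t)) (sq_nonneg (η t)))]
  · have hψt : 0 < ψ t := inv_pos.2 (hpos t ht)
    have hhψ : h t * ψ t ≤ 1 := by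
      rw [← div_eq_mul_inv, div_le_one (hpos t ht)]; exact hha t ht
    have hkh : 3 * ψ t ≤ k * h t := calc
      3 * ψ t ≤ 3 / a := by
        rw [div_eq_mul_inv]; gcongr; simp only [ψ]; gcongr; linarith [mul_nonneg hb.le ht]
      _ = k * c := by simp only [k]; field_simp
      _ ≤ k * h t := by gcongr; exact hch t ht
    have := damped_lyapunov_deriv_le (hh t ht) hb.le hψt hhψ hkh (hM t ht)
    have hdiv : (e t ^ 2 + η t ^ 2) / (a + b * t) = (e t ^ 2 + η t ^ 2) * ψ t :=
      div_eq_mul_inv _ _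
    simp only [Pi.mul_apply, hdiv]
    linarith

theorem tendsto_zero_of_damped_oscillator {a b c : ℝ} (ha : 0 < a) (hb : 0 < b) (hc : 0 < c)
    (hch : ∀ t ∈ Ici (0 : ℝ), c ≤ h t) (hha : ∀ t ∈ Ici (0 : ℝ), h t ≤ a + b * t)
    (he : ∀ t ∈ Ici (0 : ℝ), HasDerivAt e (-η t - h t * e t) t)
    (hη : ∀ t ∈ Ici (0 : ℝ), HasDerivAt η (e t) t) :
    Tendsto e atTop (nhds 0) ∧ Tendsto η atTop (nhds 0) := by
  have hW := tendsto_zero_of_antitoneOn_of_exists_lt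
    (damped_energy_antitoneOn he hη fun t ht => hc.le.trans (hch t ht))
    (fun t _ => by positivity) fun ε hε => exists_damped_energy_lt ha hb hc hε hch hha he hη
  exact ⟨tendsto_zero_of_sq_le hW (.of_forall fun t => le_add_of_nonneg_right (sq_nonneg _)),
    tendsto_zero_of_sq_le hW (.of_forall fun t => le_add_of_nonneg_left (sq_nonneg _))⟩

end DampedOscillator

structure IsCoupledVanDerPolSolution (μ K : ℝ) (x₁ w₁ x₂ w₂ : ℝ → ℝ) : Prop where
  hasDerivAt_x₁ : ∀ t ∈ Ici (0 : ℝ),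
    HasDerivAt x₁ (-w₁ t + μ * (x₁ t - (x₁ t) ^ 3 / 3) + K * (x₂ t - x₁ t)) t
  hasDerivAt_w₁ : ∀ t ∈ Ici (0 : ℝ), HasDerivAt w₁ (x₁ t) t
  hasDerivAt_x₂ : ∀ t ∈ Ici (0 : ℝ),
    HasDerivAt x₂ (-w₂ t + μ * (x₂ t - (x₂ t) ^ 3 / 3) + K * (x₁ t - x₂ t)) t
  hasDerivAt_w₂ : ∀ t ∈ Ici (0 : ℝ), HasDerivAt w₂ (x₂ t) t

namespace IsCoupledVanDerPolSolution

variable {μ K : ℝ} {x₁ w₁ x₂ w₂ : ℝ → ℝ}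

theorem energy_le (hs : IsCoupledVanDerPolSolution μ K x₁ w₁ x₂ w₂) (hμ : 0 ≤ μ) (hK : 0 ≤ K)
    {t : ℝ} (ht : 0 ≤ t) :
    x₁ t ^ 2 + w₁ t ^ 2 + x₂ t ^ 2 + w₂ t ^ 2
      ≤ x₁ 0 ^ 2 + w₁ 0 ^ 2 + x₂ 0 ^ 2 + w₂ 0 ^ 2 + 3 * μ * t := by
  have hE : ∀ s ∈ Ici (0 : ℝ), HasDerivAt (fun s => x₁ s ^ 2 + w₁ s ^ 2 + x₂ s ^ 2 + w₂ s ^ 2)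
      (2 * μ * (x₁ s ^ 2 - x₁ s ^ 4 / 3) + 2 * μ * (x₂ s ^ 2 - x₂ s ^ 4 / 3)
        - 2 * K * (x₁ s - x₂ s) ^ 2) s := fun s hs₀ =>
    ((((hs.hasDerivAt_x₁ s hs₀).pow 2).add ((hs.hasDerivAt_w₁ s hs₀).pow 2)).add
      ((hs.hasDerivAt_x₂ s hs₀).pow 2) |>.add ((hs.hasDerivAt_w₂ s hs₀).pow 2)).congr_deriv
      (by ring)
  have hlin : ∀ s : ℝ, HasDerivAt (fun s => 3 * μ * s) (3 * μ) s := fun s => by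
    simpa using (hasDerivAt_id s).const_mul (3 * μ)
  -- `x² - x⁴/3 ≤ 3/4`: the van der Pol nonlinearity injects energy at a bounded rate.
  have := sub_le_sub_of_hasDerivAt_le hE (fun s _ => hlin s) (fun s _ => by
    nlinarith [sq_nonneg (2 * x₁ s ^ 2 - 3), sq_nonneg (2 * x₂ s ^ 2 - 3),
      mul_nonneg hK (sq_nonneg (x₁ s - x₂ s))]) ht
  simp only [mul_zero, sub_zero] at this
  linarith

theorem hasDerivAt_sub (hs : IsCoupledVanDerPolSolution μ K x₁ w₁ x₂ w₂) :
    ∀ t ∈ Ici (0 : ℝ), HasDerivAt (fun s => x₁ s - x₂ s) (-(w₁ t - w₂ t)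
      - (2 * K - μ + μ / 3 * (x₁ t ^ 2 + x₁ t * x₂ t + x₂ t ^ 2)) * (x₁ t - x₂ t)) t :=
  fun t ht => ((hs.hasDerivAt_x₁ t ht).sub (hs.hasDerivAt_x₂ t ht)).congr_deriv (by ring)

end IsCoupledVanDerPolSolution

/-- Theorem (diffusive synchronization of two resistively coupled van der Pol
oscillators): if `2K > μ`, then along any solution of the coupled system
defined on `[0,∞)`, the differences `x₁ − x₂` and `w₁ − w₂` converge to zero
as `t → ∞`. -/
theorem coupled_vdp_synchronization
    (μ K : ℝ) (hμ : 0 < μ) (hK : 0 < K) (hKμ : μ < 2 * K)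
    (x₁ w₁ x₂ w₂ : ℝ → ℝ)
    (hx₁ : ∀ t ∈ Ici (0 : ℝ), HasDerivAt x₁
      (-w₁ t + μ * (x₁ t - (x₁ t) ^ 3 / 3) + K * (x₂ t - x₁ t)) t)
    (hw₁ : ∀ t ∈ Ici (0 : ℝ), HasDerivAt w₁ (x₁ t) t)
    (hx₂ : ∀ t ∈ Ici (0 : ℝ), HasDerivAt x₂
      (-w₂ t + μ * (x₂ t - (x₂ t) ^ 3 / 3) + K * (x₁ t - x₂ t)) t)
    (hw₂ : ∀ t ∈ Ici (0 : ℝ), HasDerivAt w₂ (x₂ t) t) :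
    Tendsto (fun t => x₁ t - x₂ t) atTop (nhds 0) ∧
    Tendsto (fun t => w₁ t - w₂ t) atTop (nhds 0) := by
  have hs : IsCoupledVanDerPolSolution μ K x₁ w₁ x₂ w₂ := ⟨hx₁, hw₁, hx₂, hw₂⟩
  set E₀ := x₁ 0 ^ 2 + w₁ 0 ^ 2 + x₂ 0 ^ 2 + w₂ 0 ^ 2
  have hE₀ : 0 ≤ E₀ := by positivity
  refine tendsto_zero_of_damped_oscillator (a := 2 * K - μ + μ / 2 * E₀) (b := 3 * μ ^ 2 / 2)
    (by nlinarith) (by positivity) (sub_pos.2 hKμ) (fun t _ => ?_) (fun t ht => ?_)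
    hs.hasDerivAt_sub fun t ht => (hw₁ t ht).sub (hw₂ t ht)
  · nlinarith [sq_nonneg (x₁ t + x₂ t), sq_nonneg (x₁ t - x₂ t)]
  · have := hs.energy_le hμ.le hK.le ht
    nlinarith [sq_nonneg (x₁ t - x₂ t), sq_nonneg (w₁ t), sq_nonneg (w₂ t)]
end

section
/- Let μ > 0, let (x₁, w₁, u₁) and (x₂, w₂, u₂) be two differentiable input–state trajectories of the open van der Pol system ẋᵢ = −wᵢ + μ(xᵢ − xᵢ³/3) + uᵢ, ẇᵢ = xᵢ, yᵢ = xᵢ, and define the incremental variables Δx = x₁ − x₂, Δw = w₁ − w₂, Δu = u₁ − u₂, Δy = y₁ − y₂ and the incremental storage ΔS(t) = ½(Δx(t)² + Δw(t)²). Then for all t, (d/dt)ΔS(t) ≤ μ·Δy(t)² + Δu(t)·Δy(t); that is, the van der Pol oscillator is incrementally passive up to a shortage of passivity μ·Δy². -/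
open Real Set

/-! The incremental storage `½(Δx² + Δw²)` has derivative `Δx·Δẋ + Δw·Δẇ`. The skew coupling
`ẋ = −w + …`, `ẇ = x` makes the `Δw` terms cancel, the linear part `μx` contributes `μΔx²`
and the input `ΔuΔx`, and what remains is `−(φ(x₁) − φ(x₂))(x₁ − x₂)` with `φ(s) = μs³/3`,
which is nonpositive because `φ` is monotone. -/

theorem HasDerivAt.half_sq_add_sq {f g : ℝ → ℝ} {f' g' t : ℝ}
    (hf : HasDerivAt f f' t) (hg : HasDerivAt g g' t) :
    HasDerivAt (fun s => 1 / 2 * (f s ^ 2 + g s ^ 2)) (f t * f' + g t * g') t := by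
  refine (((hf.fun_pow 2).fun_add (hg.fun_pow 2)).const_mul (1 / 2 : ℝ)).congr_deriv ?_
  ring

theorem Monotone.sub_mul_sub_nonneg {α : Type*} [Ring α] [LinearOrder α] [IsStrictOrderedRing α]
    {φ : α → α} (hφ : Monotone φ) (a b : α) :
    0 ≤ (φ a - φ b) * (a - b) :=
  (monovary_id_iff.2 hφ).sub_mul_sub_nonneg b a

/-- The left side is `Δx·Δẋ + Δw·Δẇ` for the Liénard field `ẋ = −w + μx − φ(x) + u`, `ẇ = x`. -/
theorem lienard_incremental_dissipation {φ : ℝ → ℝ} (hφ : Monotone φ)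
    (μ x₁ w₁ u₁ x₂ w₂ u₂ : ℝ) :
    (x₁ - x₂) * ((-w₁ + μ * x₁ - φ x₁ + u₁) - (-w₂ + μ * x₂ - φ x₂ + u₂))
        + (w₁ - w₂) * (x₁ - x₂) ≤
      μ * (x₁ - x₂) ^ 2 + (u₁ - u₂) * (x₁ - x₂) := by
  linear_combination hφ.sub_mul_sub_nonneg x₁ x₂

theorem monotone_const_mul_cube_div_three {μ : ℝ} (hμ : 0 ≤ μ) :
    Monotone fun s : ℝ => μ * s ^ 3 / 3 :=
  (((Odd.strictMono_pow (by decide)).monotone).const_mul hμ).div_const (by norm_num)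

/-- Theorem (incremental passivity of the van der Pol oscillator): along any
two input–state trajectories of the open van der Pol system
`ẋ = −w + μ(x − x³/3) + u`, `ẇ = x`, `y = x`, the incremental storage
`ΔS = ½(Δx² + Δw²)` satisfies the incremental dissipation inequality
`(d/dt)ΔS ≤ μΔy² + ΔuΔy` (shortage of incremental passivity `μΔy²`). -/
theorem vdp_incremental_passivity
    (μ : ℝ) (hμ : 0 < μ)
    (x₁ w₁ u₁ x₂ w₂ u₂ : ℝ → ℝ)
    (hx₁ : ∀ t : ℝ, HasDerivAt x₁ (-w₁ t + μ * (x₁ t - (x₁ t) ^ 3 / 3) + u₁ t) t)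
    (hw₁ : ∀ t : ℝ, HasDerivAt w₁ (x₁ t) t)
    (hx₂ : ∀ t : ℝ, HasDerivAt x₂ (-w₂ t + μ * (x₂ t - (x₂ t) ^ 3 / 3) + u₂ t) t)
    (hw₂ : ∀ t : ℝ, HasDerivAt w₂ (x₂ t) t) :
    ∀ t : ℝ, ∃ d : ℝ,
      HasDerivAt (fun s => (1 / 2) * ((x₁ s - x₂ s) ^ 2 + (w₁ s - w₂ s) ^ 2)) d t ∧
      d ≤ μ * (x₁ t - x₂ t) ^ 2 + (u₁ t - u₂ t) * (x₁ t - x₂ t) := by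
  intro t
  refine ⟨_, ((hx₁ t).fun_sub (hx₂ t)).half_sq_add_sq ((hw₁ t).fun_sub (hw₂ t)), ?_⟩
  linear_combination lienard_incremental_dissipation (monotone_const_mul_cube_div_three hμ.le)
    μ (x₁ t) (w₁ t) (u₁ t) (x₂ t) (w₂ t) (u₂ t)
end

section
/- Let ω > 0, ε ≥ 0, let ū : I → ℝ be continuous, and let x : I → (−2, −1) be a differentiable solution of x' = x/(1 − x²) − (ε/(1 − x²))·ū(s) (the van der Pol dynamics on the left branch of the critical manifold in the relaxation limit). Define Θ(x) = ω·∫_{−2}^x (1 − ξ²)/ξ dξ. Then the phase θ(s) = Θ(x(s)) satisfies θ' = ω + ε·(−ω/x(s))·ū(s); i.e., the infinitesimal phase response curve of the relaxation van der Pol oscillator is Z_R(θ) = −ω/x with x = Θ⁻¹(θ). -/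
open Real Set intervalIntegral

/-! By the fundamental theorem of calculus `Θ'(x) = ω (1 − x²)/x`, continuous on the branch
`x < 0`; this is exactly the factor that turns the unperturbed slow flow `x/(1 − x²)` into the
constant speed `ω`, so by the chain rule the perturbation `−ε ū/(1 − x²)` contributes
`ε (−ω/x) ū`. -/

theorem integral_hasDerivAt_right_of_continuousOn {E : Type*} [NormedAddCommGroup E]
    [NormedSpace ℝ E] [CompleteSpace E] {f : ℝ → E} {U : Set ℝ} (hU : IsOpen U)
    (hf : ContinuousOn f U) {a b : ℝ} (hab : uIcc a b ⊆ U) :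
    HasDerivAt (fun u => ∫ x in a..u, f x) (f b) b := by
  have hb : b ∈ U := hab right_mem_uIcc
  exact integral_hasDerivAt_right ((hf.mono hab).intervalIntegrable)
    (hf.stronglyMeasurableAtFilter hU b hb) (hf.continuousAt (hU.mem_nhds hb))

theorem hasDerivAt_integral_one_sub_sq_div {a y : ℝ} (ha : a < 0) (hy : y < 0) :
    HasDerivAt (fun u => ∫ ξ in a..u, (1 - ξ ^ 2) / ξ) ((1 - y ^ 2) / y) y := by
  refine integral_hasDerivAt_right_of_continuousOn (isOpen_Iio (a := 0)) ?_ ?_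
  · exact ContinuousOn.div (by fun_prop) (by fun_prop) fun ξ hξ => (mem_Iio.mp hξ).ne
  · exact fun ξ hξ => hξ.2.trans_lt (max_lt ha hy)

theorem relaxation_vdp_iPRC_general
    (ω : ℝ) (ε : ℝ)
    (I : Set ℝ) (u : ℝ → ℝ)
    (x : ℝ → ℝ) (hx : ∀ s ∈ I, x s ∈ Ioo (-2 : ℝ) (-1))
    (hode : ∀ s ∈ I,
      HasDerivAt x (x s / (1 - (x s) ^ 2) - ε / (1 - (x s) ^ 2) * u s) s) :
    ∀ s ∈ I,
      HasDerivAt (fun τ => ω * ∫ ξ in (-2 : ℝ)..(x τ), (1 - ξ ^ 2) / ξ)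
        (ω + ε * (-ω / x s) * u s) s := by
  intro s hs
  obtain ⟨hlo, hhi⟩ := hx s hs
  have hΘ := ((hasDerivAt_integral_one_sub_sq_div (a := -2) (by norm_num) (by linarith)).comp s
    (hode s hs)).const_mul ω
  have hx0 : x s ≠ 0 := by linarith
  have hx1 : 1 - x s ^ 2 ≠ 0 := by nlinarith
  refine hΘ.congr_deriv ?_
  field_simp
  ring

/-- Theorem (iPRC of the van der Pol oscillator in the relaxation limit):
along any solution of `x' = x/(1 − x²) − (ε/(1 − x²))ū(s)` staying in
`(−2, −1)`, the phase `θ(s) = Θ(x(s))` with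
`Θ(x) = ω ∫_{−2}^x (1 − ξ²)/ξ dξ` satisfies
`θ' = ω + ε(−ω/x(s))ū(s)`; i.e. the infinitesimal phase response curve is
`Z_R(θ) = −ω/x` with `x = Θ⁻¹(θ)`. -/
theorem relaxation_vdp_iPRC
    (ω : ℝ) (hω : 0 < ω) (ε : ℝ) (hε : 0 ≤ ε)
    (I : Set ℝ) (u : ℝ → ℝ) (hu : ContinuousOn u I)
    (x : ℝ → ℝ) (hx : ∀ s ∈ I, x s ∈ Ioo (-2 : ℝ) (-1))
    (hode : ∀ s ∈ I,
      HasDerivAt x (x s / (1 - (x s) ^ 2) - ε / (1 - (x s) ^ 2) * u s) s) :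
    ∀ s ∈ I,
      HasDerivAt (fun τ => ω * ∫ ξ in (-2 : ℝ)..(x τ), (1 - ξ ^ 2) / ξ)
        (ω + ε * (-ω / x s) * u s) s :=
  relaxation_vdp_iPRC_general ω ε I u x hx hode
end
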